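/- arXiv:1307.4359 — 6 statements merged into one kernel-verified Lean document; each statement's English description precedes it below -/
import Mathlib

section
/- Let G=(V,E) be a finite simple graph with edge weights w : E → ℝ_{≥0} and b : V → ℤ with b_i ≥ 1 for all i. Consider the dual b-matching LP: minimize ∑_i b_i x_i + ∑_{U∈𝒪} ⌊‖U‖_b/2⌋ z_U over x : V → ℝ_{≥0} and z : 𝒪 → ℝ_{≥0} subject to x_i + x_j + ∑_{U∈𝒪: i,j∈U} z_U ≥ w_{ij} for every edge (i,j) ∈ E. Then there exists a feasible pair (x,z) attaining the minimum of this LP such that the family L = {U ∈ 𝒪 : z_U > 0} is laminar, i.e., any two sets A,B ∈ L satisfy A ⊆ B, B ⊆ A, or A ∩ B = ∅. -/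
open Finset
open scoped Classical

/-- Feasibility for the dual `b`-matching LP: `x ≥ 0`, `z ≥ 0`, `z` supported on odd
sets, and `x_i + x_j + ∑_{U∈𝒪: i,j∈U} z_U ≥ w_{ij}` for every edge `(i,j)`. -/
def DualBMatchFeasible {V : Type*} [Fintype V] [DecidableEq V]
    (G : SimpleGraph V) (w : Sym2 V → ℝ) (b : V → ℤ)
    (x : V → ℝ) (z : Finset V → ℝ) : Prop :=
  (∀ i, 0 ≤ x i) ∧ (∀ U, 0 ≤ z U) ∧
  (∀ U : Finset V, ¬ Odd (∑ i ∈ U, b i) → z U = 0) ∧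
  (∀ i j : V, G.Adj i j →
    x i + x j +
      ∑ U ∈ (univ : Finset (Finset V)).filter
        (fun U => Odd (∑ v ∈ U, b v) ∧ i ∈ U ∧ j ∈ U), z U ≥ w s(i, j))

/-- The dual objective `∑_i b_i x_i + ∑_{U∈𝒪} ⌊‖U‖_b/2⌋ z_U`. -/
def DualBMatchObj {V : Type*} [Fintype V] [DecidableEq V]
    (b : V → ℤ) (x : V → ℝ) (z : Finset V → ℝ) : ℝ :=
  ∑ i, (b i : ℝ) * x i +
    ∑ U ∈ (univ : Finset (Finset V)).filter (fun U => Odd (∑ i ∈ U, b i)),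
      (((∑ i ∈ U, b i) / 2 : ℤ) : ℝ) * z U

/-!
Among the optimal dual solutions choose one maximizing the potential
`Φ(x, z) = |V| · ∑ᵢ xᵢ + ∑_U C(|U|, 2) z_U`. If two sets `A, B` of the support cross, shift
`ε = min(z_A, z_B)` of dual weight from `A, B` either to `A ∩ B, A ∪ B` (when `‖A ∩ B‖_b` is odd),
or to `A \ B, B \ A` while raising `x` by `ε` on `A ∩ B` (when `‖A ∩ B‖_b` is even). Either move
covers every edge at least as often as before and keeps the objective, because the parities make
the floors `⌊‖·‖_b / 2⌋` add up exactly, but it strictly increases `Φ`.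

The maximizer exists by compactness: sets of size at most one contain no edge, so `z` may be
taken to vanish on them, and then the objective bounds every coordinate of a feasible point.
-/

theorem IsCompact.exists_isMinOn_isMaxOn_lex {X α β : Type*} [TopologicalSpace X]
    [LinearOrder α] [TopologicalSpace α] [OrderClosedTopology α]
    [LinearOrder β] [TopologicalSpace β] [OrderClosedTopology β]
    {S : Set X} (hS : IsCompact S) (hne : S.Nonempty) {f : X → α} {g : X → β}
    (hf : Continuous f) (hg : Continuous g) :
    ∃ p ∈ S, IsMinOn f S p ∧ IsMaxOn g (S ∩ f ⁻¹' {f p}) p := by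
  obtain ⟨p₀, hp₀, hmin⟩ := hS.exists_isMinOn hne hf.continuousOn
  obtain ⟨p, ⟨hpS, hpf⟩, hmax⟩ :=
    (hS.inter_right (isClosed_singleton.preimage hf)).exists_isMaxOn ⟨p₀, hp₀, rfl⟩
      hg.continuousOn
  rw [Set.mem_preimage, Set.mem_singleton_iff] at hpf
  exact ⟨p, hpS, fun q hq => hpf ▸ hmin hq, hpf ▸ hmax⟩

section

variable {V : Type*} [Fintype V] [DecidableEq V] {G : SimpleGraph V} {w : Sym2 V → ℝ}
  {b : V → ℤ} {x dx : V → ℝ} {z dz : Finset V → ℝ}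

theorem DualBMatchFeasible.odd_of_pos (h : DualBMatchFeasible G w b x z) {U : Finset V}
    (hU : 0 < z U) : Odd (∑ i ∈ U, b i) := by
  by_contra hodd
  exact hU.ne' (h.2.2.1 U hodd)

theorem DualBMatchFeasible.add (h : DualBMatchFeasible G w b x z)
    (hx : ∀ i, 0 ≤ x i + dx i) (hz : ∀ U, 0 ≤ z U + dz U)
    (hodd : ∀ U : Finset V, ¬ Odd (∑ i ∈ U, b i) → dz U = 0)
    (hedge : ∀ i j, G.Adj i j → 0 ≤ dx i + dx j +
      ∑ U ∈ (univ : Finset (Finset V)).filter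
        (fun U => Odd (∑ v ∈ U, b v) ∧ i ∈ U ∧ j ∈ U), dz U) :
    DualBMatchFeasible G w b (x + dx) (z + dz) := by
  obtain ⟨-, -, hz0, hcover⟩ := h
  refine ⟨hx, hz, fun U hU => by simp [hz0 U hU, hodd U hU], fun i j hij => ?_⟩
  simp only [Pi.add_apply, sum_add_distrib]
  linarith [hcover i j hij, hedge i j hij]

theorem dualBMatchObj_add :
    DualBMatchObj b (x + dx) (z + dz) = DualBMatchObj b x z + DualBMatchObj b dx dz := by
  simp only [DualBMatchObj, Pi.add_apply, mul_add, sum_add_distrib]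
  ring

theorem exists_dualBMatchFeasible : ∃ x, DualBMatchFeasible G w b x 0 := by
  refine ⟨fun _ => ∑ e, |w e|, fun _ => sum_nonneg fun _ _ => abs_nonneg _, fun _ => le_rfl,
    fun _ _ => rfl, fun i j _ => ?_⟩
  have := (le_abs_self _).trans (single_le_sum (fun e _ => abs_nonneg (w e)) (mem_univ s(i, j)))
  simp only [Pi.zero_apply, sum_const_zero, add_zero, ge_iff_le]
  linarith [sum_nonneg fun e (_ : e ∈ univ) => abs_nonneg (w e)]

def transfer (A B C D : Finset V) : Finset V → ℝ :=
  Pi.single C 1 + Pi.single D 1 - Pi.single A 1 - Pi.single B 1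

omit [Fintype V] in
theorem sum_mul_transfer (F : Finset (Finset V)) (c : Finset V → ℝ) (A B C D : Finset V) :
    ∑ U ∈ F, c U * transfer A B C D U =
      (if C ∈ F then c C else 0) + (if D ∈ F then c D else 0)
        - (if A ∈ F then c A else 0) - (if B ∈ F then c B else 0) := by
  simp [transfer, mul_add, mul_sub, sum_add_distrib, sum_sub_distrib, Pi.single_apply]

/-- The weight `|V|` on `x` pays for the even uncrossing move, which gains `|V| · |A ∩ B|` there
and loses `|A ∩ B| · (|A ∪ B| - 1)` on the pair counts. -/
def uncrossingPotential (x : V → ℝ) (z : Finset V → ℝ) : ℝ :=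
  Fintype.card V * ∑ i, x i + ∑ U, ((#U).choose 2 : ℝ) * z U

omit [DecidableEq V] in
theorem continuous_uncrossingPotential :
    Continuous fun p : (V → ℝ) × (Finset V → ℝ) => uncrossingPotential p.1 p.2 := by
  unfold uncrossingPotential; fun_prop

variable {ε : ℝ} {S A B C D : Finset V}

theorem DualBMatchFeasible.exchange (h : DualBMatchFeasible G w b x z) (hε : 0 ≤ ε)
    (hεA : ε ≤ z A) (hεB : ε ≤ z B) (hAB : A ≠ B)
    (hA : Odd (∑ i ∈ A, b i)) (hB : Odd (∑ i ∈ B, b i))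
    (hC : Odd (∑ i ∈ C, b i)) (hD : Odd (∑ i ∈ D, b i))
    (hcover : ∀ i j, (if i ∈ A ∧ j ∈ A then (1 : ℝ) else 0) + (if i ∈ B ∧ j ∈ B then 1 else 0) ≤
      (if i ∈ C ∧ j ∈ C then 1 else 0) + (if i ∈ D ∧ j ∈ D then 1 else 0) +
        (if i ∈ S then 1 else 0) + (if j ∈ S then 1 else 0)) :
    DualBMatchFeasible G w b (x + fun v => if v ∈ S then ε else 0) (z + ε • transfer A B C D) := by
  refine h.add (fun i => ?_) (fun U => ?_) (fun U hU => ?_) (fun i j _ => ?_)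
  · have := h.1 i
    split_ifs <;> linarith
  · have := h.2.1 U
    simp only [Pi.smul_apply, transfer, Pi.add_apply, Pi.sub_apply, Pi.single_apply, smul_eq_mul]
    split_ifs <;> simp_all <;> linarith
  · have hne : ∀ X : Finset V, Odd (∑ i ∈ X, b i) → U ≠ X := fun X hX hUX => hU (hUX ▸ hX)
    simp [transfer, hne A hA, hne B hB, hne C hC, hne D hD]
  · have := hcover i j
    simp only [Pi.smul_apply, smul_eq_mul, ← mul_sum]
    rw [← sum_congr rfl fun U _ => one_mul (transfer A B C D U), sum_mul_transfer]
    simp only [mem_filter, mem_univ, true_and, hA, hB, hC, hD]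
    split_ifs at this ⊢ <;> nlinarith

theorem dualBMatchObj_exchange (hA : Odd (∑ i ∈ A, b i)) (hB : Odd (∑ i ∈ B, b i))
    (hC : Odd (∑ i ∈ C, b i)) (hD : Odd (∑ i ∈ D, b i)) :
    DualBMatchObj b (x + fun v => if v ∈ S then ε else 0) (z + ε • transfer A B C D) =
      DualBMatchObj b x z + ε * ((∑ i ∈ S, b i + (∑ i ∈ C, b i) / 2 + (∑ i ∈ D, b i) / 2
        - (∑ i ∈ A, b i) / 2 - (∑ i ∈ B, b i) / 2 : ℤ) : ℝ) := by
  rw [dualBMatchObj_add]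
  congr 1
  simp only [DualBMatchObj, Pi.smul_apply, smul_eq_mul, mul_left_comm _ ε, ← mul_sum,
    sum_mul_transfer]
  simp [mul_ite, sum_ite_mem, hA, hB, hC, hD]
  rw [← sum_mul]
  ring

theorem uncrossingPotential_exchange :
    uncrossingPotential (x + fun v => if v ∈ S then ε else 0) (z + ε • transfer A B C D) =
      uncrossingPotential x z + ε * (Fintype.card V * #S + (#C).choose 2 + (#D).choose 2
        - (#A).choose 2 - (#B).choose 2) := by
  simp only [uncrossingPotential, Pi.add_apply, Pi.smul_apply, smul_eq_mul, mul_add,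
    sum_add_distrib, mul_left_comm _ ε, ← mul_sum, sum_mul_transfer]
  simp [sum_ite_mem]
  ring

def eraseSmall (z : Finset V → ℝ) : Finset V → ℝ := fun U => if #U ≤ 1 then 0 else z U

theorem DualBMatchFeasible.eraseSmall (h : DualBMatchFeasible G w b x z) :
    DualBMatchFeasible G w b x (eraseSmall z) := by
  obtain ⟨hx, hz, hodd, hcover⟩ := h
  refine ⟨hx, fun U => ?_, fun U hU => ?_, fun i j hij => ?_⟩
  · unfold _root_.eraseSmall; split_ifs <;> simp [hz U]
  · simp [_root_.eraseSmall, hodd U hU]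
  · convert hcover i j hij using 2
    refine sum_congr rfl fun U hU => if_neg ?_
    simp only [mem_filter, mem_univ, true_and] at hU
    exact not_le.2 (one_lt_card.2 ⟨i, hU.2.1, j, hU.2.2, hij.ne⟩)

theorem dualBMatchObj_eraseSmall_le (hb : ∀ i, 0 ≤ b i) (hz : ∀ U, 0 ≤ z U) :
    DualBMatchObj b x (eraseSmall z) ≤ DualBMatchObj b x z := by
  refine add_le_add_right (sum_le_sum fun U _ => mul_le_mul_of_nonneg_left ?_ ?_) _
  · unfold eraseSmall; split_ifs <;> simp [hz U]
  · exact_mod_cast Int.ediv_nonneg (sum_nonneg fun i _ => hb i) zero_le_two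

omit [DecidableEq V] in
theorem uncrossingPotential_eraseSmall :
    uncrossingPotential x (eraseSmall z) = uncrossingPotential x z := by
  unfold uncrossingPotential eraseSmall
  congr 1
  refine sum_congr rfl fun U _ => ?_
  split_ifs with hU
  · simp [Nat.choose_eq_zero_of_lt (hU.trans_lt one_lt_two)]
  · rfl

theorem DualBMatchFeasible.le_dualBMatchObj (h : DualBMatchFeasible G w b x z)
    (hb : ∀ i, 1 ≤ b i) (hsmall : ∀ U, #U ≤ 1 → z U = 0) :
    (∀ i, x i ≤ DualBMatchObj b x z) ∧ ∀ U, z U ≤ DualBMatchObj b x z := by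
  obtain ⟨hx, hz, hodd, -⟩ := h
  have hbR : ∀ i, (1 : ℝ) ≤ b i := fun i => by exact_mod_cast hb i
  have hsum_nonneg (U : Finset V) : 0 ≤ ∑ i ∈ U, b i :=
    sum_nonneg fun i _ => zero_le_one.trans (hb i)
  have hxterm (i : V) : 0 ≤ (b i : ℝ) * x i := mul_nonneg (zero_le_one.trans (hbR i)) (hx i)
  have hzterm (U : Finset V) : 0 ≤ (((∑ i ∈ U, b i) / 2 : ℤ) : ℝ) * z U :=
    mul_nonneg (by exact_mod_cast Int.ediv_nonneg (hsum_nonneg U) zero_le_two) (hz U)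
  have hxsum : 0 ≤ ∑ i, (b i : ℝ) * x i := sum_nonneg fun i _ => hxterm i
  have hzsum : 0 ≤ ∑ U ∈ (univ : Finset (Finset V)).filter (fun U => Odd (∑ i ∈ U, b i)),
      (((∑ i ∈ U, b i) / 2 : ℤ) : ℝ) * z U := sum_nonneg fun U _ => hzterm U
  refine ⟨fun i => ?_, fun U => ?_⟩
  · calc x i ≤ b i * x i := le_mul_of_one_le_left (hx i) (hbR i)
      _ ≤ ∑ i, (b i : ℝ) * x i := single_le_sum (fun i _ => hxterm i) (mem_univ i)
      _ ≤ DualBMatchObj b x z := le_add_of_nonneg_right hzsum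
  by_cases hU : Odd (∑ i ∈ U, b i) ∧ 1 < #U
  · have hcoef : (1 : ℝ) ≤ (((∑ i ∈ U, b i) / 2 : ℤ) : ℝ) := by
      have : (#U : ℤ) ≤ ∑ i ∈ U, b i := by
        simpa using card_nsmul_le_sum U b 1 fun i _ => hb i
      have := Int.odd_iff.1 hU.1
      exact_mod_cast (by omega : (1 : ℤ) ≤ (∑ i ∈ U, b i) / 2)
    calc z U ≤ (((∑ i ∈ U, b i) / 2 : ℤ) : ℝ) * z U := le_mul_of_one_le_left (hz U) hcoef
      _ ≤ _ := single_le_sum (fun U _ => hzterm U) (by simpa using hU.1)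
      _ ≤ DualBMatchObj b x z := le_add_of_nonneg_left hxsum
  · rw [not_and_or, not_lt] at hU
    rcases hU with hU | hU
    · rw [hodd U hU]; exact add_nonneg hxsum hzsum
    · rw [hsmall U hU]; exact add_nonneg hxsum hzsum

theorem continuous_dualBMatchObj :
    Continuous fun p : (V → ℝ) × (Finset V → ℝ) => DualBMatchObj b p.1 p.2 := by
  unfold DualBMatchObj; fun_prop

theorem isClosed_setOf_dualBMatchFeasible :
    IsClosed {p : (V → ℝ) × (Finset V → ℝ) | DualBMatchFeasible G w b p.1 p.2} := by
  simp only [DualBMatchFeasible, Set.ofPred_and, Set.ofPred_forall]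
  refine .inter (isClosed_iInter fun i => isClosed_le (by fun_prop) (by fun_prop)) <|
    .inter (isClosed_iInter fun U => isClosed_le (by fun_prop) (by fun_prop)) <|
    .inter (isClosed_iInter fun U => isClosed_iInter fun _ =>
      isClosed_eq (by fun_prop) (by fun_prop)) <|
    isClosed_iInter fun i => isClosed_iInter fun j => isClosed_iInter fun _ =>
      isClosed_le (by fun_prop) (by fun_prop)

theorem isCompact_dualBMatch_sublevel (hb : ∀ i, 1 ≤ b i) (c : ℝ) :
    IsCompact {p : (V → ℝ) × (Finset V → ℝ) | DualBMatchFeasible G w b p.1 p.2 ∧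
      (∀ U, #U ≤ 1 → p.2 U = 0) ∧ DualBMatchObj b p.1 p.2 ≤ c} := by
  refine (isCompact_Icc (a := 0) (b := (fun _ => c, fun _ => c))).of_isClosed_subset ?_ ?_
  · simp only [Set.ofPred_and, Set.ofPred_forall]
    exact isClosed_setOf_dualBMatchFeasible.inter <|
      (isClosed_iInter fun U => isClosed_iInter fun _ =>
        isClosed_eq (by fun_prop) (by fun_prop)).inter
      (isClosed_le continuous_dualBMatchObj continuous_const)
  · rintro p ⟨hp, hsmall, hc⟩
    have hle := hp.le_dualBMatchObj hb hsmall
    exact ⟨⟨hp.1, hp.2.1⟩, fun i => (hle.1 i).trans hc, fun U => (hle.2 U).trans hc⟩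

theorem DualBMatchFeasible.exists_uncross_of_odd_inter (h : DualBMatchFeasible G w b x z)
    (hA : 0 < z A) (hB : 0 < z B) (hAB : ¬A ⊆ B) (hBA : ¬B ⊆ A)
    (hI : Odd (∑ i ∈ A ∩ B, b i)) :
    ∃ x' z', DualBMatchFeasible G w b x' z' ∧ DualBMatchObj b x' z' = DualBMatchObj b x z ∧
      uncrossingPotential x z < uncrossingPotential x' z' := by
  set ε := min (z A) (z B)
  have hε : 0 < ε := lt_min hA hB
  have hAo := h.odd_of_pos hA
  have hBo := h.odd_of_pos hB
  have hsum := sum_union_inter (s₁ := A) (s₂ := B) (f := b)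
  have hUo : Odd (∑ i ∈ A ∪ B, b i) := by
    rw [Int.odd_iff] at hAo hBo hI ⊢; omega
  refine ⟨_, _, h.exchange (S := ∅) hε.le (min_le_left _ _) (min_le_right _ _)
    (fun h => hAB h.subset) hAo hBo hI hUo ?_, ?_, ?_⟩
  · intro i j
    simp only [mem_inter, mem_union, notMem_empty, if_false]
    by_cases hiA : i ∈ A <;> by_cases hjA : j ∈ A <;> by_cases hiB : i ∈ B <;>
      by_cases hjB : j ∈ B <;> simp [hiA, hjA, hiB, hjB]
  · have hzero : (∑ i ∈ ∅, b i + (∑ i ∈ A ∩ B, b i) / 2 + (∑ i ∈ A ∪ B, b i) / 2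
        - (∑ i ∈ A, b i) / 2 - (∑ i ∈ B, b i) / 2 : ℤ) = 0 := by
      rw [Int.odd_iff] at hAo hBo hI hUo; rw [sum_empty]; omega
    rw [dualBMatchObj_exchange hAo hBo hI hUo, hzero, Int.cast_zero, mul_zero, add_zero]
  · rw [uncrossingPotential_exchange]
    refine lt_add_of_pos_right _ (mul_pos hε ?_)
    have hcard : (#(A ∪ B) : ℝ) + #(A ∩ B) = #A + #B := by
      exact_mod_cast card_union_add_card_inter A B
    have hIA : (#(A ∩ B) : ℝ) < #A := by exact_mod_cast card_lt_card (inf_lt_left.2 hAB)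
    have hAU : (#A : ℝ) < #(A ∪ B) := by exact_mod_cast card_lt_card (left_lt_sup.2 hBA)
    simp only [card_empty, Nat.cast_zero, mul_zero, zero_add, Nat.cast_choose_two]
    nlinarith [mul_pos (sub_pos.2 hIA) (sub_pos.2 hAU)]

theorem DualBMatchFeasible.exists_uncross_of_even_inter (h : DualBMatchFeasible G w b x z)
    (hA : 0 < z A) (hB : 0 < z B) (hAB : ¬A ⊆ B) (hI : (A ∩ B).Nonempty)
    (hIe : ¬Odd (∑ i ∈ A ∩ B, b i)) :
    ∃ x' z', DualBMatchFeasible G w b x' z' ∧ DualBMatchObj b x' z' = DualBMatchObj b x z ∧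
      uncrossingPotential x z < uncrossingPotential x' z' := by
  set ε := min (z A) (z B)
  have hε : 0 < ε := lt_min hA hB
  have hAo := h.odd_of_pos hA
  have hBo := h.odd_of_pos hB
  have hsumA := sum_inter_add_sum_sdiff A B b
  have hsumB := sum_inter_add_sum_sdiff B A b
  rw [inter_comm] at hsumB
  rw [Int.not_odd_iff_even, Int.even_iff] at hIe
  have hCo : Odd (∑ i ∈ A \ B, b i) := by rw [Int.odd_iff] at hAo ⊢; omega
  have hDo : Odd (∑ i ∈ B \ A, b i) := by rw [Int.odd_iff] at hBo ⊢; omega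
  refine ⟨_, _, h.exchange (S := A ∩ B) hε.le (min_le_left _ _) (min_le_right _ _)
    (fun h => hAB h.subset) hAo hBo hCo hDo ?_, ?_, ?_⟩
  · intro i j
    simp only [mem_inter, mem_sdiff]
    by_cases hiA : i ∈ A <;> by_cases hjA : j ∈ A <;> by_cases hiB : i ∈ B <;>
      by_cases hjB : j ∈ B <;> simp [hiA, hjA, hiB, hjB]
  · have hzero : (∑ i ∈ A ∩ B, b i + (∑ i ∈ A \ B, b i) / 2 + (∑ i ∈ B \ A, b i) / 2
        - (∑ i ∈ A, b i) / 2 - (∑ i ∈ B, b i) / 2 : ℤ) = 0 := by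
      rw [Int.odd_iff] at hAo hBo; omega
    rw [dualBMatchObj_exchange hAo hBo hCo hDo, hzero, Int.cast_zero, mul_zero, add_zero]
  · rw [uncrossingPotential_exchange]
    refine lt_add_of_pos_right _ (mul_pos hε ?_)
    have hcA : (#(A \ B) : ℝ) + #(A ∩ B) = #A := by
      exact_mod_cast card_sdiff_add_card_inter A B
    have hcB : (#(B \ A) : ℝ) + #(A ∩ B) = #B := by
      rw [inter_comm]; exact_mod_cast card_sdiff_add_card_inter B A
    have hcU : (#(A ∪ B) : ℝ) + #(A ∩ B) = #A + #B := by
      exact_mod_cast card_union_add_card_inter A B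
    have hUV : (#(A ∪ B) : ℝ) ≤ Fintype.card V := by exact_mod_cast card_le_univ _
    have hI1 : (1 : ℝ) ≤ #(A ∩ B) := by exact_mod_cast hI.card_pos
    simp only [Nat.cast_choose_two]
    nlinarith

theorem DualBMatchFeasible.exists_uncross (hb : ∀ i, 0 ≤ b i) (h : DualBMatchFeasible G w b x z)
    (hA : 0 < z A) (hB : 0 < z B) (hAB : ¬A ⊆ B) (hBA : ¬B ⊆ A) (hI : (A ∩ B).Nonempty) :
    ∃ x' z', DualBMatchFeasible G w b x' z' ∧ (∀ U, #U ≤ 1 → z' U = 0) ∧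
      DualBMatchObj b x' z' ≤ DualBMatchObj b x z ∧
      uncrossingPotential x z < uncrossingPotential x' z' := by
  obtain ⟨x', z', h', hobj, hpot⟩ := (em (Odd (∑ i ∈ A ∩ B, b i))).elim
    (h.exists_uncross_of_odd_inter hA hB hAB hBA) (h.exists_uncross_of_even_inter hA hB hAB hI)
  refine ⟨x', _root_.eraseSmall z', h'.eraseSmall, fun U hU => if_pos hU, ?_, ?_⟩
  · exact (dualBMatchObj_eraseSmall_le hb h'.2.1).trans hobj.le
  · rwa [uncrossingPotential_eraseSmall]

end

theorem dual_bmatching_laminar_optimum_general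
    {V : Type*} [Fintype V] [DecidableEq V]
    (G : SimpleGraph V)
    (w : Sym2 V → ℝ)
    (b : V → ℤ) (hb : ∀ i, 1 ≤ b i) :
    ∃ (x : V → ℝ) (z : Finset V → ℝ),
      DualBMatchFeasible G w b x z ∧
      (∀ x' z', DualBMatchFeasible G w b x' z' →
        DualBMatchObj b x z ≤ DualBMatchObj b x' z') ∧
      (∀ A B : Finset V, 0 < z A → 0 < z B → A ⊆ B ∨ B ⊆ A ∨ A ∩ B = ∅) := by
  have hb₀ i : 0 ≤ b i := zero_le_one.trans (hb i)
  obtain ⟨x₀, h₀⟩ := exists_dualBMatchFeasible (G := G) (w := w) (b := b)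
  obtain ⟨p, ⟨hp, -, hpc⟩, hmin, hmax⟩ :=
    (isCompact_dualBMatch_sublevel (G := G) (w := w) hb (DualBMatchObj b x₀ 0)
      ).exists_isMinOn_isMaxOn_lex ⟨(x₀, 0), h₀, fun _ _ => rfl, le_rfl⟩
      continuous_dualBMatchObj continuous_uncrossingPotential
  have hopt x' z' (h' : DualBMatchFeasible G w b x' z') (hsmall : ∀ U, #U ≤ 1 → z' U = 0) :
      DualBMatchObj b p.1 p.2 ≤ DualBMatchObj b x' z' := by
    by_cases hc : DualBMatchObj b x' z' ≤ DualBMatchObj b x₀ 0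
    · exact isMinOn_iff.1 hmin (x', z') ⟨h', hsmall, hc⟩
    · exact hpc.trans (not_le.1 hc).le
  refine ⟨p.1, p.2, hp, fun x' z' h' => ?_, fun A B hA hB => ?_⟩
  · exact (hopt x' _ h'.eraseSmall fun U hU => if_pos hU).trans
      (dualBMatchObj_eraseSmall_le hb₀ h'.2.1)
  by_contra! hcross
  obtain ⟨x', z', h', hsmall, hobj, hpot⟩ :=
    hp.exists_uncross hb₀ hA hB hcross.1 hcross.2.1 hcross.2.2
  exact hpot.not_ge (isMaxOn_iff.1 hmax (x', z') ⟨⟨h', hsmall, hobj.trans hpc⟩,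
    (hopt x' z' h' hsmall).antisymm' hobj⟩)

/-- the dual `b`-matching LP has an optimal solution whose support
`L = {U : z_U > 0}` is a laminar family. -/
theorem dual_bmatching_laminar_optimum
    {V : Type*} [Fintype V] [DecidableEq V]
    (G : SimpleGraph V) [DecidableRel G.Adj]
    (w : Sym2 V → ℝ) (hw : ∀ e ∈ G.edgeFinset, 0 ≤ w e)
    (b : V → ℤ) (hb : ∀ i, 1 ≤ b i) :
    ∃ (x : V → ℝ) (z : Finset V → ℝ),
      DualBMatchFeasible G w b x z ∧
      (∀ x' z', DualBMatchFeasible G w b x' z' →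
        DualBMatchObj b x z ≤ DualBMatchObj b x' z') ∧
      (∀ A B : Finset V, 0 < z A → 0 < z B → A ⊆ B ∨ B ⊆ A ∨ A ∩ B = ∅) :=
  dual_bmatching_laminar_optimum_general G w b hb
end

section
/- Let 0 < ε ≤ 1, let G=(V,Ê) be a finite simple graph with b : V → ℤ, b_i ≥ 1, in which every edge weight has the form ŵ_k = (1+ε)^k for some integer k ≥ 0, with Ê_k the edges of weight ŵ_k. Let u = {u_{ijk}} and u^s = {u^s_{ijk}} be nonnegative reals indexed by edges (i,j) and levels k, with u_{ijk} = u^s_{ijk} = 0 unless (i,j) ∈ Ê_k. Suppose that for each level k and every nonempty proper subset U ⊆ V, (1−ε/16)·Cut_k(U,u^s) ≤ Cut_k(U,u) ≤ (1+ε/16)·Cut_k(U,u^s), where Cut_k(U,v) = ∑_{i∈U} ∑_{j∉U:(i,j)∈Ê_k} v_{ijk}. Let x = ({x_{i(ℓ)}}, {z_{U,ℓ}}) be nonnegative reals (i ∈ V, U ∈ 𝒪_s, levels ℓ) such that for every U ∈ 𝒪_s and level ℓ with z_{U,ℓ} > 0, ∑_{k≥ℓ} (∑_{(i,j)∈Ê_k: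 i,j∈U} u^s_{ijk} − ∑_{i∈U} ∑_{j∉U:(i,j)∈Ê_k} u^s_{ijk}) ≥ 0. Define F(x,v) = ∑_{i,ℓ} x_{i(ℓ)} (∑_{k≥ℓ} ∑_{j:(i,j)∈Ê_k} v_{ijk}) + ∑_{U∈𝒪_s,ℓ} z_{U,ℓ} (∑_{k≥ℓ} ∑_{(i,j)∈Ê_k: i,j∈U} v_{ijk}). Then F(x,u^s) ≥ (1−ε/8)·∑_k ∑_{(i,j)∈Ê_k} ŵ_k u^s_{ijk} implies F(x,u) ≥ (1−ε/2)·∑_k ∑_{(i,j)∈Ê_k} ŵ_k u_{ijk}. -/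
open Finset
open scoped Classical

/-- The small odd sets `𝒪_s = {U : ‖U‖_b odd, ‖U‖_b ≤ 4/ε}`. -/
noncomputable def smallOddSets {V : Type*} [Fintype V] [DecidableEq V]
    (b : V → ℤ) (ε : ℝ) : Finset (Finset V) :=
  (univ : Finset (Finset V)).filter
    (fun U => Odd (∑ i ∈ U, b i) ∧ ((∑ i ∈ U, b i : ℤ) : ℝ) ≤ 4 / ε)

/-- `Cut_k(U,v)`: the `v`-weight of the level-`k` edges crossing `U`. -/
noncomputable def cutWeight {V : Type*} [Fintype V] [DecidableEq V]
    (E : Finset (Sym2 V)) (lev : Sym2 V → ℕ) (k : ℕ) (U : Finset V)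
    (v : Sym2 V → ℕ → ℝ) : ℝ :=
  ∑ e ∈ E.filter (fun e => lev e = k ∧ (∃ a ∈ e, a ∈ U) ∧ ∃ a ∈ e, a ∉ U), v e k

/-- the `v`-weight of the level-`k` edges with both endpoints in `U`. -/
noncomputable def innerWeight {V : Type*} [Fintype V] [DecidableEq V]
    (E : Finset (Sym2 V)) (lev : Sym2 V → ℕ) (k : ℕ) (U : Finset V)
    (v : Sym2 V → ℕ → ℝ) : ℝ :=
  ∑ e ∈ E.filter (fun e => lev e = k ∧ ∀ a ∈ e, a ∈ U), v e k

/-- the `v`-weight of the level-`k` edges incident to `i`. -/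
noncomputable def degWeight {V : Type*} [Fintype V] [DecidableEq V]
    (E : Finset (Sym2 V)) (lev : Sym2 V → ℕ) (k : ℕ) (i : V)
    (v : Sym2 V → ℕ → ℝ) : ℝ :=
  ∑ e ∈ E.filter (fun e => lev e = k ∧ i ∈ e), v e k

/-- `F(x,v)` from Lemma 14. -/
noncomputable def Fval {V : Type*} [Fintype V] [DecidableEq V]
    (E : Finset (Sym2 V)) (b : V → ℤ) (ε : ℝ) (lev : Sym2 V → ℕ) (K : Finset ℕ)
    (xk : V → ℕ → ℝ) (z : Finset V → ℕ → ℝ) (v : Sym2 V → ℕ → ℝ) : ℝ :=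
  (∑ i, ∑ ℓ ∈ K, xk i ℓ *
      ∑ k ∈ K.filter (fun k => ℓ ≤ k), degWeight E lev k i v) +
  ∑ U ∈ smallOddSets b ε, ∑ ℓ ∈ K, z U ℓ *
      ∑ k ∈ K.filter (fun k => ℓ ≤ k), innerWeight E lev k U v

/-- total weighted mass `∑_k ∑_{(i,j)∈Ê_k} ŵ_k v_{ijk}`. -/
noncomputable def totalWeight {V : Type*} [Fintype V] [DecidableEq V]
    (E : Finset (Sym2 V)) (ε : ℝ) (lev : Sym2 V → ℕ) (K : Finset ℕ)
    (v : Sym2 V → ℕ → ℝ) : ℝ :=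
  ∑ k ∈ K, ∑ e ∈ E.filter (fun e => lev e = k), (1 + ε) ^ k * v e k

open scoped Classical

private lemma ite_mem_sum {V : Type*} [Fintype V] [DecidableEq V]
    (U : Finset V) (a b : V) (hab : a ≠ b) (c : ℝ) :
    ∑ i ∈ U, (if i ∈ s(a, b) then c else 0)
      = 2 * (if (∀ x ∈ s(a, b), x ∈ U) then c else 0)
        + (if ((∃ x ∈ s(a, b), x ∈ U) ∧ ∃ x ∈ s(a, b), x ∉ U) then c else 0) := by
  have h : ∀ i ∈ U, (if i ∈ s(a, b) then c else 0)
      = (if i = a then c else 0) + (if i = b then c else 0) := by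
    intro i _
    by_cases hia : i = a
    · subst hia; simp [hab, Sym2.mem_iff]
    · by_cases hib : i = b
      · subst hib; simp [Ne.symm hab, Sym2.mem_iff]
      · simp [hia, hib, Sym2.mem_iff]
  rw [Finset.sum_congr rfl h, Finset.sum_add_distrib]
  simp only [Finset.sum_ite_eq' U, Sym2.mem_iff, forall_eq_or_imp, forall_eq, exists_eq_or_imp,
    exists_eq_left]
  by_cases ha : a ∈ U <;> by_cases hb : b ∈ U <;> simp [ha, hb] <;> ring

private lemma per_edge {V : Type*} [Fintype V] [DecidableEq V]
    (e : Sym2 V) (hd : ¬ e.IsDiag) (U : Finset V) (c : ℝ) :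
    ∑ i ∈ U, (if i ∈ e then c else 0)
      = 2 * (if (∀ x ∈ e, x ∈ U) then c else 0)
        + (if ((∃ x ∈ e, x ∈ U) ∧ ∃ x ∈ e, x ∉ U) then c else 0) := by
  revert hd
  induction e using Sym2.ind with
  | _ a b => exact fun hd => ite_mem_sum U a b (fun h => hd (Sym2.mk_isDiag_iff.mpr h)) c

private lemma sum_deg_eq {V : Type*} [Fintype V] [DecidableEq V]
    (E : Finset (Sym2 V)) (hE : ∀ e ∈ E, ¬ e.IsDiag)
    (lev : Sym2 V → ℕ) (k : ℕ) (U : Finset V) (v : Sym2 V → ℕ → ℝ) :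
    ∑ i ∈ U, degWeight E lev k i v
      = 2 * innerWeight E lev k U v + cutWeight E lev k U v := by
  unfold degWeight innerWeight cutWeight
  simp only [Finset.sum_filter]
  rw [Finset.sum_comm, Finset.mul_sum, ← Finset.sum_add_distrib]
  refine Finset.sum_congr rfl fun e he => ?_
  by_cases hlev : lev e = k
  · simp only [hlev, true_and]
    exact per_edge e (hE e he) U (v e k)
  · simp [hlev]

private lemma inner_singleton {V : Type*} [Fintype V] [DecidableEq V]
    (E : Finset (Sym2 V)) (hE : ∀ e ∈ E, ¬ e.IsDiag)
    (lev : Sym2 V → ℕ) (k : ℕ) (i : V) (v : Sym2 V → ℕ → ℝ) :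
    innerWeight E lev k ({i} : Finset V) v = 0 := by
  unfold innerWeight
  have h : E.filter (fun e => lev e = k ∧ ∀ a ∈ e, a ∈ ({i} : Finset V)) = ∅ := by
    rw [Finset.filter_eq_empty_iff]
    rintro e he ⟨-, hall⟩
    refine hE e he ?_
    have : ∀ (e' : Sym2 V), (∀ a ∈ e', a ∈ ({i} : Finset V)) → e'.IsDiag := by
      intro e'
      induction e' using Sym2.ind with
      | _ a b =>
        intro h
        have ha := h a (by simp)
        have hb := h b (by simp)
        simp only [Finset.mem_singleton] at ha hb
        simp [Sym2.mk_isDiag_iff, ha, hb]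
    exact this e hall
  rw [h, Finset.sum_empty]

private lemma deg_eq_cut {V : Type*} [Fintype V] [DecidableEq V]
    (E : Finset (Sym2 V)) (hE : ∀ e ∈ E, ¬ e.IsDiag)
    (lev : Sym2 V → ℕ) (k : ℕ) (i : V) (v : Sym2 V → ℕ → ℝ) :
    degWeight E lev k i v = cutWeight E lev k ({i} : Finset V) v := by
  have h := sum_deg_eq E hE lev k ({i} : Finset V) v
  rw [Finset.sum_singleton, inner_singleton E hE lev k i v] at h
  linarith

private lemma cut_univ {V : Type*} [Fintype V] [DecidableEq V]
    (E : Finset (Sym2 V)) (lev : Sym2 V → ℕ) (k : ℕ) (v : Sym2 V → ℕ → ℝ) :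
    cutWeight E lev k (univ : Finset V) v = 0 := by
  simp [cutWeight]

private lemma inner_univ {V : Type*} [Fintype V] [DecidableEq V]
    (E : Finset (Sym2 V)) (lev : Sym2 V → ℕ) (k : ℕ) (v : Sym2 V → ℕ → ℝ) :
    innerWeight E lev k (univ : Finset V) v
      = ∑ e ∈ E.filter (fun e => lev e = k), v e k := by
  simp [innerWeight]
/-- Lemma 14: if `u^s` is a per-level `(1±ε/16)` cut sparsifier of `u`
and the support of `z` satisfies the constraint `𝔾(u^s,x)`, then a `(1−ε/8)` lower
bound on `F(x,u^s)` switches to a `(1−ε/2)` lower bound on `F(x,u)`. -/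
theorem sparsifier_switch
    {V : Type*} [Fintype V] [DecidableEq V]
    (G : SimpleGraph V) [DecidableRel G.Adj]
    (b : V → ℤ) (hb : ∀ i, 1 ≤ b i)
    (ε : ℝ) (hε0 : 0 < ε) (hε1 : ε ≤ 1)
    (lev : Sym2 V → ℕ) (K : Finset ℕ) (hK : K = G.edgeFinset.image lev)
    (u us : Sym2 V → ℕ → ℝ)
    (hu0 : ∀ e k, 0 ≤ u e k) (hus0 : ∀ e k, 0 ≤ us e k)
    (husupp : ∀ e k, u e k ≠ 0 → e ∈ G.edgeFinset ∧ lev e = k)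
    (hussupp : ∀ e k, us e k ≠ 0 → e ∈ G.edgeFinset ∧ lev e = k)
    -- cut sparsifier condition, for every level and every nonempty proper subset
    (hsparse : ∀ k ∈ K, ∀ U : Finset V, U.Nonempty → U ≠ univ →
      (1 - ε / 16) * cutWeight G.edgeFinset lev k U us
          ≤ cutWeight G.edgeFinset lev k U u ∧
      cutWeight G.edgeFinset lev k U u
          ≤ (1 + ε / 16) * cutWeight G.edgeFinset lev k U us)
    (xk : V → ℕ → ℝ) (z : Finset V → ℕ → ℝ)
    (hxk : ∀ i k, 0 ≤ xk i k) (hz : ∀ U ℓ, 0 ≤ z U ℓ)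
    -- 𝔾(u^s, x): on the support of z, internal weight dominates cut weight
    (hG : ∀ U ∈ smallOddSets b ε, ∀ ℓ ∈ K, 0 < z U ℓ →
      0 ≤ ∑ k ∈ K.filter (fun k => ℓ ≤ k),
        (innerWeight G.edgeFinset lev k U us - cutWeight G.edgeFinset lev k U us)) :
    Fval G.edgeFinset b ε lev K xk z us
        ≥ (1 - ε / 8) * totalWeight G.edgeFinset ε lev K us →
    Fval G.edgeFinset b ε lev K xk z u
        ≥ (1 - ε / 2) * totalWeight G.edgeFinset ε lev K u := by
  intro hFs
  set E := G.edgeFinset with hEdef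
  have hE : ∀ e ∈ E, ¬ e.IsDiag := by
    intro e he
    exact (SimpleGraph.not_isDiag_of_mem_edgeSet G (SimpleGraph.mem_edgeFinset.mp he))
  set c : ℝ := ε / 16 with hc
  have hc0 : 0 ≤ c := by positivity
  -- nonnegativity of the various weights
  have hInn_nn : ∀ (w : Sym2 V → ℕ → ℝ), (∀ e k, 0 ≤ w e k) → ∀ k U,
      0 ≤ innerWeight E lev k U w := fun w hw k U =>
    Finset.sum_nonneg fun e _ => hw e k
  have hDeg_nn : ∀ (w : Sym2 V → ℕ → ℝ), (∀ e k, 0 ≤ w e k) → ∀ k i,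
      0 ≤ degWeight E lev k i w := fun w hw k i =>
    Finset.sum_nonneg fun e _ => hw e k
  -- cut bounds for every nonempty U
  have hcut : ∀ k ∈ K, ∀ U : Finset V, U.Nonempty →
      (1 - c) * cutWeight E lev k U us ≤ cutWeight E lev k U u ∧
      cutWeight E lev k U u ≤ (1 + c) * cutWeight E lev k U us := by
    intro k hk U hU
    by_cases hUuniv : U = univ
    · subst hUuniv
      rw [cut_univ, cut_univ]
      norm_num
    · exact hsparse k hk U hU hUuniv
  -- degree bounds
  have hdeg : ∀ k ∈ K, ∀ i : V,
      (1 - c) * degWeight E lev k i us ≤ degWeight E lev k i u ∧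
      degWeight E lev k i u ≤ (1 + c) * degWeight E lev k i us := by
    intro k hk i
    rw [deg_eq_cut E hE lev k i u, deg_eq_cut E hE lev k i us]
    exact hcut k hk {i} (Finset.singleton_nonempty i)
  -- inner lower bound
  have hInn : ∀ k ∈ K, ∀ U : Finset V, U.Nonempty →
      (1 - c) * innerWeight E lev k U us - c * cutWeight E lev k U us
        ≤ innerWeight E lev k U u := by
    intro k hk U hU
    have hS : (1 - c) * ∑ i ∈ U, degWeight E lev k i us
        ≤ ∑ i ∈ U, degWeight E lev k i u := by
      rw [Finset.mul_sum]
      exact Finset.sum_le_sum fun i _ => (hdeg k hk i).1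
    have hC := (hcut k hk U hU).2
    rw [sum_deg_eq E hE lev k U u, sum_deg_eq E hE lev k U us] at hS
    nlinarith [hS, hC]
  -- every small odd set is nonempty
  have hsmall_ne : ∀ U ∈ smallOddSets b ε, U.Nonempty := by
    intro U hU
    rw [smallOddSets, Finset.mem_filter] at hU
    obtain ⟨-, hodd, -⟩ := hU
    rw [Finset.nonempty_iff_ne_empty]
    rintro rfl
    rw [Finset.sum_empty] at hodd
    exact (Int.not_odd_iff_even.mpr Even.zero) hodd
  -- F(x,u) ≥ (1 - ε/8) F(x,us)
  have hF : (1 - ε / 8) * Fval E b ε lev K xk z us ≤ Fval E b ε lev K xk z u := by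
    unfold Fval
    rw [mul_add]
    have hA : (1 - ε / 8) * (∑ i, ∑ ℓ ∈ K, xk i ℓ *
          ∑ k ∈ K.filter (fun k => ℓ ≤ k), degWeight E lev k i us)
        ≤ ∑ i, ∑ ℓ ∈ K, xk i ℓ *
          ∑ k ∈ K.filter (fun k => ℓ ≤ k), degWeight E lev k i u := by
      rw [Finset.mul_sum]
      refine Finset.sum_le_sum fun i _ => ?_
      rw [Finset.mul_sum]
      refine Finset.sum_le_sum fun ℓ hℓ => ?_
      have h1 : 0 ≤ ∑ k ∈ K.filter (fun k => ℓ ≤ k), degWeight E lev k i us :=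
        Finset.sum_nonneg fun k _ => hDeg_nn us hus0 k i
      have h2 : (1 - c) * ∑ k ∈ K.filter (fun k => ℓ ≤ k), degWeight E lev k i us
          ≤ ∑ k ∈ K.filter (fun k => ℓ ≤ k), degWeight E lev k i u := by
        rw [Finset.mul_sum]
        exact Finset.sum_le_sum fun k hk => (hdeg k (Finset.mem_filter.mp hk).1 i).1
      have h3 : (1 - ε / 8) * ∑ k ∈ K.filter (fun k => ℓ ≤ k), degWeight E lev k i us
          ≤ ∑ k ∈ K.filter (fun k => ℓ ≤ k), degWeight E lev k i u := by
        nlinarith [h1, h2, hε0.le]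
      calc (1 - ε / 8) * (xk i ℓ * ∑ k ∈ K.filter (fun k => ℓ ≤ k), degWeight E lev k i us)
          = xk i ℓ * ((1 - ε / 8) * ∑ k ∈ K.filter (fun k => ℓ ≤ k), degWeight E lev k i us) := by
            ring
        _ ≤ xk i ℓ * ∑ k ∈ K.filter (fun k => ℓ ≤ k), degWeight E lev k i u :=
            mul_le_mul_of_nonneg_left h3 (hxk i ℓ)
    have hB : (1 - ε / 8) * (∑ U ∈ smallOddSets b ε, ∑ ℓ ∈ K, z U ℓ *
          ∑ k ∈ K.filter (fun k => ℓ ≤ k), innerWeight E lev k U us)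
        ≤ ∑ U ∈ smallOddSets b ε, ∑ ℓ ∈ K, z U ℓ *
          ∑ k ∈ K.filter (fun k => ℓ ≤ k), innerWeight E lev k U u := by
      rw [Finset.mul_sum]
      refine Finset.sum_le_sum fun U hU => ?_
      rw [Finset.mul_sum]
      refine Finset.sum_le_sum fun ℓ hℓ => ?_
      rcases eq_or_lt_of_le (hz U ℓ) with hz0 | hzpos
      · rw [← hz0]; simp
      · have hGs := hG U hU ℓ hℓ hzpos
        rw [Finset.sum_sub_distrib] at hGs
        have h2 : (1 - c) * (∑ k ∈ K.filter (fun k => ℓ ≤ k), innerWeight E lev k U us)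
              - c * ∑ k ∈ K.filter (fun k => ℓ ≤ k), cutWeight E lev k U us
            ≤ ∑ k ∈ K.filter (fun k => ℓ ≤ k), innerWeight E lev k U u := by
          rw [Finset.mul_sum, Finset.mul_sum, ← Finset.sum_sub_distrib]
          exact Finset.sum_le_sum fun k hk =>
            hInn k (Finset.mem_filter.mp hk).1 U (hsmall_ne U hU)
        have h4 : 0 ≤ c * (∑ k ∈ K.filter (fun k => ℓ ≤ k), innerWeight E lev k U us
            - ∑ k ∈ K.filter (fun k => ℓ ≤ k), cutWeight E lev k U us) :=
          mul_nonneg hc0 hGs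
        have h3 : (1 - ε / 8) * ∑ k ∈ K.filter (fun k => ℓ ≤ k), innerWeight E lev k U us
            ≤ ∑ k ∈ K.filter (fun k => ℓ ≤ k), innerWeight E lev k U u := by
          have h8 : ε / 8 = 2 * c := by rw [hc]; ring
          rw [h8]
          linarith [h2, h4]
        calc (1 - ε / 8) * (z U ℓ * ∑ k ∈ K.filter (fun k => ℓ ≤ k), innerWeight E lev k U us)
            = z U ℓ * ((1 - ε / 8) * ∑ k ∈ K.filter (fun k => ℓ ≤ k), innerWeight E lev k U us) := by
              ring
          _ ≤ z U ℓ * ∑ k ∈ K.filter (fun k => ℓ ≤ k), innerWeight E lev k U u :=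
              mul_le_mul_of_nonneg_left h3 (hz U ℓ)
    exact add_le_add hA hB
  -- totalWeight comparison
  have hTW : totalWeight E ε lev K u ≤ (1 + c) * totalWeight E ε lev K us := by
    unfold totalWeight
    rw [Finset.mul_sum]
    refine Finset.sum_le_sum fun k hk => ?_
    rw [← Finset.mul_sum, ← Finset.mul_sum, ← inner_univ E lev k u, ← inner_univ E lev k us]
    have hIle : innerWeight E lev k univ u ≤ (1 + c) * innerWeight E lev k univ us := by
      have hS : ∑ i ∈ univ, degWeight E lev k i u
          ≤ (1 + c) * ∑ i ∈ univ, degWeight E lev k i us := by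
        rw [Finset.mul_sum]
        exact Finset.sum_le_sum fun i _ => (hdeg k hk i).2
      rw [sum_deg_eq E hE lev k univ u, sum_deg_eq E hE lev k univ us,
        cut_univ, cut_univ] at hS
      nlinarith [hS]
    have hpow : (0:ℝ) ≤ (1 + ε) ^ k := by positivity
    calc (1 + ε) ^ k * innerWeight E lev k univ u
        ≤ (1 + ε) ^ k * ((1 + c) * innerWeight E lev k univ us) :=
          mul_le_mul_of_nonneg_left hIle hpow
      _ = (1 + c) * ((1 + ε) ^ k * innerWeight E lev k univ us) := by ring
  have hTWnn_us : 0 ≤ totalWeight E ε lev K us :=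
    Finset.sum_nonneg fun k _ => Finset.sum_nonneg fun e _ =>
      mul_nonneg (by positivity) (hus0 e k)
  have hTWnn_u : 0 ≤ totalWeight E ε lev K u :=
    Finset.sum_nonneg fun k _ => Finset.sum_nonneg fun e _ =>
      mul_nonneg (by positivity) (hu0 e k)
  -- combine
  have h18 : (0:ℝ) ≤ 1 - ε / 8 := by linarith
  have hstep1 : (1 - ε / 8) * ((1 - ε / 8) * totalWeight E ε lev K us)
      ≤ Fval E b ε lev K xk z u :=
    le_trans (mul_le_mul_of_nonneg_left hFs h18) hF
  have h12 : (0:ℝ) ≤ 1 - ε / 2 := by linarith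
  have hstep2 : (1 - ε / 2) * totalWeight E ε lev K u
      ≤ (1 - ε / 2) * ((1 + c) * totalWeight E ε lev K us) :=
    mul_le_mul_of_nonneg_left hTW h12
  have hnum : (1 - ε / 2) * ((1 + c) * totalWeight E ε lev K us)
      ≤ (1 - ε / 8) * ((1 - ε / 8) * totalWeight E ε lev K us) := by
    have hd : (0:ℝ) ≤ (3 * ε / 16 + 3 * ε ^ 2 / 64) * totalWeight E ε lev K us :=
      mul_nonneg (by positivity) hTWnn_us
    rw [hc]; nlinarith [hd]
  linarith [hstep1, hstep2, hnum]
end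

section
/- Let G=(V,Ê) be a finite simple graph with b : V → ℤ, b_i ≥ 1, whose edges are partitioned into levels Ê_k with discretized weights ŵ_k = (1+ε)^k (ε > 0), and suppose each edge (i,j) ∈ Ê_k carries a true weight w_{ij} with ŵ_k ≤ w_{ij} ≤ (1+ε)·ŵ_k. For each level k let M_k : Ê_k → ℕ be a maximal uncapacitated b-matching of Ê_k: ∑_{j:(i,j)∈Ê_k} M_k(i,j) ≤ b_i for every i, and no single edge multiplicity can be increased without violating those degree constraints; write |M_k| = ∑_{(i,j)∈Ê_k} M_k(i,j). Let β^b be the maximum of ∑_{(i,j)∈Ê} w_{ij} y_{ij} over y : Ê → ℝ_{≥0} with ∑_{j:(i,j)∈Ê} y_{ij} ≤ b_i for every i (the bipartite relaxation). Then β^b ≤ 2(1+ε)·∑_k ŵ_k·|M_k|. -/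
open Finset
open scoped Classical


private lemma double_count {V : Type*} [Fintype V] [DecidableEq V]
    (S : Finset V) (A : Finset (Sym2 V)) (f : Sym2 V → ℝ) :
    ∑ i ∈ S, ∑ e ∈ A.filter (fun e => i ∈ e), f e
      = ∑ e ∈ A, ((S.filter (fun i => i ∈ e)).card : ℝ) * f e := by
  simp only [Finset.sum_filter]
  rw [Finset.sum_comm]
  refine Finset.sum_congr rfl fun e _ => ?_
  rw [← Finset.sum_filter, Finset.sum_const, nsmul_eq_mul]

private lemma card_endpoints {V : Type*} [Fintype V] [DecidableEq V]
    (G : SimpleGraph V) [DecidableRel G.Adj] (e : Sym2 V) (he : e ∈ G.edgeFinset) :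
    (Finset.univ.filter (fun i => i ∈ e)).card = 2 := by
  induction e with
  | h a c =>
    have hadj : G.Adj a c := by simpa using he
    have hne : a ≠ c := hadj.ne
    have : Finset.univ.filter (fun i => i ∈ s(a, c)) = {a, c} := by
      ext i; simp [Sym2.mem_iff]
    rw [this, Finset.card_insert_of_notMem (by simp [hne]), Finset.card_singleton]

/-- the bipartite-relaxation LP value is at most `2(1+ε)` times the
total discretized weight of per-level maximal uncapacitated `b`-matchings. -/
theorem bipartite_relaxation_le_maximal_matchings
    {V : Type*} [Fintype V] [DecidableEq V]
    (G : SimpleGraph V) [DecidableRel G.Adj]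
    (b : V → ℤ) (hb : ∀ i, 1 ≤ b i)
    (ε : ℝ) (hε : 0 < ε)
    (lev : Sym2 V → ℕ) (K : Finset ℕ) (hK : K = G.edgeFinset.image lev)
    -- true weights: `ŵ_k ≤ w_{ij} ≤ (1+ε)·ŵ_k` for `(i,j) ∈ Ê_k`
    (w : Sym2 V → ℝ)
    (hw : ∀ e ∈ G.edgeFinset,
      (1 + ε) ^ (lev e) ≤ w e ∧ w e ≤ (1 + ε) * (1 + ε) ^ (lev e))
    -- per-level maximal uncapacitated b-matchings `M_k : Ê_k → ℕ`
    (M : ℕ → Sym2 V → ℕ)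
    (hMsupp : ∀ k, ∀ e, M k e ≠ 0 → e ∈ G.edgeFinset ∧ lev e = k)
    (hMdeg : ∀ k ∈ K, ∀ i : V,
      ∑ e ∈ G.edgeFinset.filter (fun e => lev e = k ∧ i ∈ e), (M k e : ℤ) ≤ b i)
    -- maximality: no single edge multiplicity can be increased
    (hMmax : ∀ k ∈ K, ∀ e ∈ G.edgeFinset.filter (fun e => lev e = k),
      ∃ i, i ∈ e ∧
        (b i : ℤ) <
          (∑ e' ∈ G.edgeFinset.filter (fun e' => lev e' = k ∧ i ∈ e'), (M k e' : ℤ)) + 1)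
    -- β^b: the bipartite relaxation value (degree constraints only)
    (βb : ℝ)
    (hβb : IsGreatest
      {v | ∃ y : Sym2 V → ℝ,
        (∀ e ∈ G.edgeFinset, 0 ≤ y e) ∧
        (∀ i : V, ∑ e ∈ G.edgeFinset.filter (fun e => i ∈ e), y e ≤ (b i : ℝ)) ∧
        v = ∑ e ∈ G.edgeFinset, w e * y e} βb) :
    βb ≤ 2 * (1 + ε) *
      ∑ k ∈ K, (1 + ε) ^ k *
        ∑ e ∈ G.edgeFinset.filter (fun e => lev e = k), (M k e : ℝ) := by
  obtain ⟨⟨y, hy0, hydeg, hval⟩, -⟩ := hβb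
  have hpos : (0:ℝ) < 1 + ε := by linarith
  -- Step 3: per-level bound ∑ y ≤ 2 ∑ M
  have step3 : ∀ k ∈ K,
      ∑ e ∈ G.edgeFinset.filter (fun e => lev e = k), y e
        ≤ 2 * ∑ e ∈ G.edgeFinset.filter (fun e => lev e = k), (M k e : ℝ) := by
    intro k hk
    set Ek := G.edgeFinset.filter (fun e => lev e = k) with hEk
    set S : Finset V := Finset.univ.filter (fun i =>
      (b i : ℤ) ≤ ∑ e' ∈ G.edgeFinset.filter (fun e' => lev e' = k ∧ i ∈ e'), (M k e' : ℤ))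
      with hS
    have hEksub : ∀ e ∈ Ek, e ∈ G.edgeFinset := fun e he => (Finset.mem_filter.mp he).1
    have hfilter : ∀ i : V, G.edgeFinset.filter (fun e' => lev e' = k ∧ i ∈ e')
        = Ek.filter (fun e => i ∈ e) := by
      intro i; rw [hEk, Finset.filter_filter]
    -- every edge of Ek has a saturated endpoint
    have hsat : ∀ e ∈ Ek, 1 ≤ (S.filter (fun i => i ∈ e)).card := by
      intro e he
      obtain ⟨i, hie, hlt⟩ := hMmax k hk e he
      refine Finset.card_pos.mpr ⟨i, ?_⟩
      simp only [hS, Finset.mem_filter, Finset.mem_univ, true_and]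
      exact ⟨Int.lt_add_one_iff.mp hlt, hie⟩
    have h1 : ∑ e ∈ Ek, y e ≤ ∑ i ∈ S, ∑ e ∈ Ek.filter (fun e => i ∈ e), y e := by
      rw [double_count]
      refine Finset.sum_le_sum fun e he => ?_
      have := hsat e he
      have hy := hy0 e (hEksub e he)
      calc y e = 1 * y e := (one_mul _).symm
        _ ≤ ((S.filter (fun i => i ∈ e)).card : ℝ) * y e := by
            apply mul_le_mul_of_nonneg_right _ hy
            exact_mod_cast this
    have h2 : ∀ i ∈ S, ∑ e ∈ Ek.filter (fun e => i ∈ e), y e ≤ (b i : ℝ) := by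
      intro i _
      refine le_trans ?_ (hydeg i)
      refine Finset.sum_le_sum_of_subset_of_nonneg ?_ ?_
      · intro e he
        rw [Finset.mem_filter] at he
        exact Finset.mem_filter.mpr ⟨hEksub e he.1, he.2⟩
      · intro e he _
        exact hy0 e (Finset.mem_filter.mp he).1
    have h3 : ∀ i ∈ S, (b i : ℝ) ≤ ∑ e ∈ Ek.filter (fun e => i ∈ e), (M k e : ℝ) := by
      intro i hi
      simp only [hS, Finset.mem_filter, Finset.mem_univ, true_and] at hi
      rw [hfilter i] at hi
      exact_mod_cast hi
    have h4 : ∑ i ∈ S, ∑ e ∈ Ek.filter (fun e => i ∈ e), (M k e : ℝ)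
        ≤ ∑ i ∈ Finset.univ, ∑ e ∈ Ek.filter (fun e => i ∈ e), (M k e : ℝ) := by
      refine Finset.sum_le_sum_of_subset_of_nonneg (Finset.subset_univ S) ?_
      intro i _ _
      exact Finset.sum_nonneg fun e _ => by positivity
    have h5 : ∑ i ∈ Finset.univ, ∑ e ∈ Ek.filter (fun e => i ∈ e), (M k e : ℝ)
        = 2 * ∑ e ∈ Ek, (M k e : ℝ) := by
      rw [double_count, Finset.mul_sum]
      refine Finset.sum_congr rfl fun e he => ?_
      rw [card_endpoints G e (hEksub e he)]; norm_num
    calc ∑ e ∈ Ek, y e ≤ ∑ i ∈ S, ∑ e ∈ Ek.filter (fun e => i ∈ e), y e := h1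
      _ ≤ ∑ i ∈ S, (b i : ℝ) := Finset.sum_le_sum h2
      _ ≤ ∑ i ∈ S, ∑ e ∈ Ek.filter (fun e => i ∈ e), (M k e : ℝ) := Finset.sum_le_sum h3
      _ ≤ _ := h4
      _ = 2 * ∑ e ∈ Ek, (M k e : ℝ) := h5
  -- Step 1+2
  have step1 : βb ≤ (1 + ε) * ∑ e ∈ G.edgeFinset, (1 + ε) ^ (lev e) * y e := by
    rw [hval, Finset.mul_sum]
    refine Finset.sum_le_sum fun e he => ?_
    have hy := hy0 e he
    have := (hw e he).2
    calc w e * y e ≤ ((1 + ε) * (1 + ε) ^ (lev e)) * y e :=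
          mul_le_mul_of_nonneg_right this hy
      _ = (1 + ε) * ((1 + ε) ^ (lev e) * y e) := by ring
  have step2 : ∑ e ∈ G.edgeFinset, (1 + ε) ^ (lev e) * y e
      = ∑ k ∈ K, (1 + ε) ^ k * ∑ e ∈ G.edgeFinset.filter (fun e => lev e = k), y e := by
    rw [← Finset.sum_fiberwise_of_maps_to (g := lev) (t := K)
      (fun e he => by rw [hK]; exact Finset.mem_image_of_mem lev he)]
    refine Finset.sum_congr rfl fun k _ => ?_
    rw [Finset.mul_sum]
    refine Finset.sum_congr rfl fun e he => ?_
    rw [(Finset.mem_filter.mp he).2]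
  calc βb ≤ (1 + ε) * ∑ e ∈ G.edgeFinset, (1 + ε) ^ (lev e) * y e := step1
    _ = (1 + ε) * ∑ k ∈ K, (1 + ε) ^ k *
        ∑ e ∈ G.edgeFinset.filter (fun e => lev e = k), y e := by rw [step2]
    _ ≤ (1 + ε) * ∑ k ∈ K, (1 + ε) ^ k *
        (2 * ∑ e ∈ G.edgeFinset.filter (fun e => lev e = k), (M k e : ℝ)) := by
        refine mul_le_mul_of_nonneg_left (Finset.sum_le_sum fun k hk => ?_) hpos.le
        exact mul_le_mul_of_nonneg_left (step3 k hk) (by positivity)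
    _ = 2 * (1 + ε) * ∑ k ∈ K, (1 + ε) ^ k *
        ∑ e ∈ G.edgeFinset.filter (fun e => lev e = k), (M k e : ℝ) := by
        rw [Finset.mul_sum, Finset.mul_sum]
        exact Finset.sum_congr rfl fun k _ => by ring
end

section
/- Let 0 < ε ≤ 1/16, let G=(V,Ê) be a finite simple graph with b : V → ℤ, b_i ≥ 1, in which every edge weight has the form ŵ_k = (1+ε)^k for some integer k ≥ 0, with Ê_k the edges of weight ŵ_k. Set a_e = 2048·ε^{−2} and ε₀ = 1 − ε/256, and let β^b be the maximum of ∑_{(i,j)∈Ê} ŵ_{ij} y_{ij} over y : Ê → ℝ_{≥0} with ∑_{j:(i,j)∈Ê} y_{ij} ≤ b_i for every i. Given for each level k a maximal uncapacitated b-matching M_k of Ê_k, there exist nonnegative reals {x_i}_{i∈V} and {x_{i(k)}} (i ∈ V, levels k) such that: x_{i(k)} + x_{j(k)} ≥ (1−ε₀)·ŵ_k for every (i,j) ∈ Ê_k; x_{i(k)} ≤ ŵ_k for every i and k; x_i ≥ x_{i(k)} for every i and k; and β^b/a_e ≤ ∑_i b_i x_i ≤ β^b/4. -/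
open Finset
open scoped Classical

noncomputable section AuxInitialDual

variable {V : Type*} [Fintype V] [DecidableEq V]

def eMin (f : V → ℝ) : Sym2 V → ℝ :=
  Sym2.lift ⟨fun i j => min (f i) (f j), fun i j => min_comm _ _⟩

def eSum (f : V → ℝ) : Sym2 V → ℝ :=
  Sym2.lift ⟨fun i j => f i + f j, fun i j => add_comm _ _⟩

lemma eMin_le {f : V → ℝ} {e : Sym2 V} {v : V} (hv : v ∈ e) : eMin f e ≤ f v := by
  induction e using Sym2.ind with
  | _ i j =>
    rcases Sym2.mem_iff.mp hv with h | h <;> subst h <;>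
      simp [eMin, min_le_left, min_le_right]

lemma eMin_nonneg {f : V → ℝ} (hf : ∀ u, 0 ≤ f u) (e : Sym2 V) : 0 ≤ eMin f e := by
  induction e using Sym2.ind with
  | _ i j => simpa [eMin] using ⟨hf i, hf j⟩

lemma eSum_two (e : Sym2 V) : eSum (fun _ => (1:ℝ)) e = 2 := by
  induction e using Sym2.ind with
  | _ i j => norm_num [eSum]

lemma eMin_ge {f : V → ℝ} (h1 : ∀ u, f u ≤ 1) (e : Sym2 V) :
    eSum f e - 1 ≤ eMin f e := by
  induction e using Sym2.ind with
  | _ i j =>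
    simp only [eMin, eSum, Sym2.lift_mk]
    rcases le_total (f i) (f j) with h | h
    · rw [min_eq_left h]; linarith [h1 j]
    · rw [min_eq_right h]; linarith [h1 i]

lemma eSum_le_of_mem {f : V → ℝ} (hf : ∀ u, 0 ≤ f u) {e : Sym2 V} {v : V} (hv : v ∈ e) :
    f v ≤ eSum f e := by
  induction e using Sym2.ind with
  | _ i j =>
    rcases Sym2.mem_iff.mp hv with h | h <;> subst h <;>
      simp only [eSum, Sym2.lift_mk]
    · linarith [hf j]
    · linarith [hf i]

lemma eSum_nonneg {f : V → ℝ} (hf : ∀ u, 0 ≤ f u) (e : Sym2 V) : 0 ≤ eSum f e := by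
  induction e using Sym2.ind with
  | _ i j => have := hf i; have := hf j; simp only [eSum, Sym2.lift_mk]; linarith

lemma sum_mem_filter_eq {f : V → ℝ} {e : Sym2 V} (he : ¬ e.IsDiag) :
    ∑ v ∈ univ.filter (fun v => v ∈ e), f v = eSum f e := by
  induction e using Sym2.ind with
  | _ i j =>
    have hij : i ≠ j := by simpa using he
    have : univ.filter (fun v => v ∈ s(i, j)) = {i, j} := by
      ext v; simp [Sym2.mem_iff]
    rw [this, Finset.sum_pair hij]
    simp [eSum]

lemma dcount (E : Finset (Sym2 V)) (hE : ∀ e ∈ E, ¬ e.IsDiag)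
    (F : Sym2 V → ℝ) (f : V → ℝ) :
    ∑ e ∈ E, F e * eSum f e = ∑ v, f v * ∑ e ∈ E.filter (fun e => v ∈ e), F e := by
  have h1 : ∀ e ∈ E, F e * eSum f e = ∑ v ∈ univ.filter (fun v => v ∈ e), F e * f v := by
    intro e he
    rw [← Finset.mul_sum, sum_mem_filter_eq (hE e he)]
  rw [Finset.sum_congr rfl h1]
  have h2 : ∀ e ∈ E, ∑ v ∈ univ.filter (fun v => v ∈ e), F e * f v
      = ∑ v : V, if v ∈ e then F e * f v else 0 := by
    intro e _; rw [Finset.sum_filter]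
  rw [Finset.sum_congr rfl h2, Finset.sum_comm]
  refine Finset.sum_congr rfl fun v _ => ?_
  rw [Finset.mul_sum, Finset.sum_filter]
  refine Finset.sum_congr rfl fun e _ => ?_
  split <;> ring

lemma swap_helper (F : ℕ → ℕ → ℝ) (n : ℕ) :
    ∑ m ∈ range n, ∑ m' ∈ range m, F m m'
      = ∑ m' ∈ range n, ∑ m ∈ Ico (m' + 1) n, F m m' := by
  induction n with
  | zero => simp
  | succ n ih =>
    rw [Finset.sum_range_succ, ih, Finset.sum_range_succ]
    have h1 : ∀ m' ∈ range n, ∑ m ∈ Ico (m' + 1) (n + 1), F m m'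
        = (∑ m ∈ Ico (m' + 1) n, F m m') + F n m' := by
      intro m' hm'
      have : m' + 1 ≤ n := Nat.succ_le_of_lt (Finset.mem_range.mp hm')
      rw [Finset.sum_Ico_succ_top this]
    rw [Finset.sum_congr rfl h1, Finset.sum_add_distrib]
    simp [Finset.Ico_self]

lemma geo_bound {ε : ℝ} (hε : 0 < ε) (a L : ℕ) :
    ε * ∑ m ∈ Ico (a + 1) (L + 1), (1 + ε) ^ (L - m) ≤ (1 + ε) ^ (L - a) := by
  have hx : (0:ℝ) < 1 + ε := by linarith
  rcases le_or_gt a L with haL | haL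
  · have hre : ∑ m ∈ Ico (a + 1) (L + 1), (1 + ε) ^ (L - m)
        = ∑ t ∈ range (L - a), (1 + ε) ^ t := by
      refine Finset.sum_nbij' (i := fun m => L - m) (j := fun t => L - t) ?_ ?_ ?_ ?_ ?_
      · intro m hm
        rw [Finset.mem_Ico] at hm
        rw [Finset.mem_range]
        show L - m < L - a
        omega
      · intro t ht
        rw [Finset.mem_range] at ht
        rw [Finset.mem_Ico]
        show a + 1 ≤ L - t ∧ L - t < L + 1
        omega
      · intro m hm
        rw [Finset.mem_Ico] at hm
        show L - (L - m) = m
        omega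
      · intro t ht
        rw [Finset.mem_range] at ht
        show L - (L - t) = t
        omega
      · intro m hm; rfl
    rw [hre]
    have := geom_sum_mul (x := (1 + ε)) (L - a)
    have heq : ε * ∑ t ∈ range (L - a), (1 + ε) ^ t = (1 + ε) ^ (L - a) - 1 := by
      have h1 : (1 + ε) - 1 = ε := by ring
      calc ε * ∑ t ∈ range (L - a), (1 + ε) ^ t
          = (∑ t ∈ range (L - a), (1 + ε) ^ t) * ((1 + ε) - 1) := by rw [h1]; ring
        _ = (1 + ε) ^ (L - a) - 1 := geom_sum_mul _ _
    rw [heq]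
    linarith
  · have : Ico (a + 1) (L + 1) = ∅ := by
      rw [Finset.Ico_eq_empty_iff]
      omega
    rw [this]
    simp only [Finset.sum_empty, mul_zero]
    positivity

section Greedy

variable (E : Finset (Sym2 V)) (b : V → ℝ) (N : ℕ → Sym2 V → ℝ) (L : ℕ)

def Rr : ℕ → V → ℝ
  | 0 => fun v => b v
  | m + 1 => fun v =>
      Rr m v - ∑ e ∈ E.filter (fun e => v ∈ e),
        N (L - m) e * eMin (fun u => Rr m u / b u) e

def qE (m : ℕ) (e : Sym2 V) : ℝ :=
  N (L - m) e * eMin (fun u => Rr E b N L m u / b u) e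

def Qv (m : ℕ) (v : V) : ℝ := ∑ e ∈ E.filter (fun e => v ∈ e), qE E b N L m e

lemma Rr_succ (m : ℕ) (v : V) :
    Rr E b N L (m + 1) v = Rr E b N L m v - Qv E b N L m v := rfl

variable (hb : ∀ v, (1:ℝ) ≤ b v) (hN0 : ∀ k e, 0 ≤ N k e)
  (hNdeg : ∀ k v, ∑ e ∈ E.filter (fun e => v ∈ e), N k e ≤ b v)

include hb hN0 hNdeg

lemma bpos (v : V) : (0:ℝ) < b v := lt_of_lt_of_le one_pos (hb v)

lemma Rr_bounds : ∀ m v, 0 ≤ Rr E b N L m v ∧ Rr E b N L m v ≤ b v := by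
  intro m
  induction m with
  | zero => intro v; exact ⟨le_trans zero_le_one (hb v), le_refl _⟩
  | succ m ih =>
    intro v
    have hg0 : ∀ u, 0 ≤ Rr E b N L m u / b u := fun u =>
      div_nonneg (ih u).1 (le_of_lt (lt_of_lt_of_le one_pos (hb u)))
    have hQ0 : 0 ≤ Qv E b N L m v := by
      refine Finset.sum_nonneg fun e _ => ?_
      exact mul_nonneg (hN0 _ _) (eMin_nonneg hg0 e)
    have hQle : Qv E b N L m v ≤ Rr E b N L m v := by
      have h1 : Qv E b N L m v
          ≤ ∑ e ∈ E.filter (fun e => v ∈ e), N (L - m) e * (Rr E b N L m v / b v) := by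
        refine Finset.sum_le_sum fun e he => ?_
        have hv : v ∈ e := (Finset.mem_filter.mp he).2
        exact mul_le_mul_of_nonneg_left (eMin_le hv) (hN0 _ _)
      have h2 : ∑ e ∈ E.filter (fun e => v ∈ e), N (L - m) e * (Rr E b N L m v / b v)
          = (∑ e ∈ E.filter (fun e => v ∈ e), N (L - m) e) * (Rr E b N L m v / b v) := by
        rw [Finset.sum_mul]
      have h3 : (∑ e ∈ E.filter (fun e => v ∈ e), N (L - m) e) * (Rr E b N L m v / b v)
          ≤ b v * (Rr E b N L m v / b v) :=
        mul_le_mul_of_nonneg_right (hNdeg _ v) (hg0 v)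
      have h4 : b v * (Rr E b N L m v / b v) = Rr E b N L m v := by
        rw [mul_comm]
        exact div_mul_cancel₀ _ (ne_of_gt (lt_of_lt_of_le one_pos (hb v)))
      linarith
    constructor
    · rw [Rr_succ]; linarith
    · rw [Rr_succ]; linarith [(ih v).2]

omit hb hN0 hNdeg in
lemma Rr_eq_sub (m : ℕ) (v : V) :
    Rr E b N L m v = b v - ∑ m' ∈ range m, Qv E b N L m' v := by
  induction m with
  | zero => simp [Rr]
  | succ m ih => rw [Rr_succ, Finset.sum_range_succ, ih]; ring

omit hb hN0 hNdeg in
lemma eSum_one_sub (g : V → ℝ) (e : Sym2 V) :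
    eSum (fun u => 1 - g u) e = 2 - eSum g e := by
  induction e using Sym2.ind with
  | _ i j => simp only [eSum, Sym2.lift_mk]; ring

lemma greedy_main (ε : ℝ) (hε : 0 < ε) (hε1 : ε ≤ 1) (lev : Sym2 V → ℕ)
    (hE : ∀ e ∈ E, ¬ e.IsDiag)
    (hNlev : ∀ k e, N k e ≠ 0 → lev e = k) :
    ∃ y : Sym2 V → ℝ,
      (∀ e, 0 ≤ y e) ∧
      (∀ v, ∑ e ∈ E.filter (fun e => v ∈ e), y e ≤ b v) ∧
      ε * ∑ m ∈ range (L + 1), (1 + ε) ^ (L - m) * ∑ e ∈ E, N (L - m) e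
        ≤ 3 * ∑ e ∈ E, (1 + ε) ^ (lev e) * y e := by
  have hbpos : ∀ v, (0:ℝ) < b v := fun v => lt_of_lt_of_le one_pos (hb v)
  have hRb := Rr_bounds E b N L hb hN0 hNdeg
  have hg0 : ∀ m u, 0 ≤ Rr E b N L m u / b u := fun m u =>
    div_nonneg (hRb m u).1 (hbpos u).le
  have hg1 : ∀ m u, Rr E b N L m u / b u ≤ 1 := fun m u =>
    (div_le_one (hbpos u)).2 (hRb m u).2
  have hq0 : ∀ m e, 0 ≤ qE E b N L m e := fun m e =>
    mul_nonneg (hN0 _ _) (eMin_nonneg (hg0 m) e)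
  have hQv0 : ∀ m v, 0 ≤ Qv E b N L m v := fun m v =>
    Finset.sum_nonneg fun e _ => hq0 m e
  have hw0 : ∀ n : ℕ, (0:ℝ) ≤ (1 + ε) ^ n := fun n => by positivity
  refine ⟨fun e => ∑ m ∈ range (L + 1), qE E b N L m e, ?_, ?_, ?_⟩
  · intro e; exact Finset.sum_nonneg fun m _ => hq0 m e
  · -- feasibility
    intro v
    have h1 : ∑ e ∈ E.filter (fun e => v ∈ e), ∑ m ∈ range (L + 1), qE E b N L m e
        = ∑ m ∈ range (L + 1), Qv E b N L m v := Finset.sum_comm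
    rw [h1]
    have h2 : ∑ m ∈ range (L + 1), Qv E b N L m v = b v - Rr E b N L (L + 1) v := by
      rw [Rr_eq_sub E b N L (L + 1) v]; ring
    rw [h2]
    linarith [(hRb (L + 1) v).1]
  · -- main value inequality
    have hVal : ∑ e ∈ E, (1 + ε) ^ (lev e) * (∑ m ∈ range (L + 1), qE E b N L m e)
        = ∑ m ∈ range (L + 1), (1 + ε) ^ (L - m) * ∑ e ∈ E, qE E b N L m e := by
      calc ∑ e ∈ E, (1 + ε) ^ (lev e) * (∑ m ∈ range (L + 1), qE E b N L m e)
          = ∑ e ∈ E, ∑ m ∈ range (L + 1), (1 + ε) ^ (lev e) * qE E b N L m e := by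
            exact Finset.sum_congr rfl fun e _ => by rw [Finset.mul_sum]
        _ = ∑ m ∈ range (L + 1), ∑ e ∈ E, (1 + ε) ^ (lev e) * qE E b N L m e :=
            Finset.sum_comm
        _ = ∑ m ∈ range (L + 1), ∑ e ∈ E, (1 + ε) ^ (L - m) * qE E b N L m e := by
            refine Finset.sum_congr rfl fun m _ => Finset.sum_congr rfl fun e _ => ?_
            by_cases hqe : qE E b N L m e = 0
            · rw [hqe, mul_zero, mul_zero]
            · have hNe : N (L - m) e ≠ 0 := by
                intro h0
                exact hqe (by simp [qE, h0])
              rw [hNlev (L - m) e hNe]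
        _ = ∑ m ∈ range (L + 1), (1 + ε) ^ (L - m) * ∑ e ∈ E, qE E b N L m e := by
            exact Finset.sum_congr rfl fun m _ => by rw [Finset.mul_sum]
    have hstage : ∀ m, ∑ e ∈ E, N (L - m) e
        ≤ (∑ e ∈ E, qE E b N L m e) + ∑ v, (b v - Rr E b N L m v) := by
      intro m
      have hf0 : ∀ u, 0 ≤ 1 - Rr E b N L m u / b u := fun u => by linarith [hg1 m u]
      have hper : ∀ e ∈ E, N (L - m) e
          ≤ qE E b N L m e + N (L - m) e * eSum (fun u => 1 - Rr E b N L m u / b u) e := by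
        intro e _
        have h1 : eSum (fun u => Rr E b N L m u / b u) e - 1
            ≤ eMin (fun u => Rr E b N L m u / b u) e := eMin_ge (hg1 m) e
        have h2 : eSum (fun u => 1 - Rr E b N L m u / b u) e
            = 2 - eSum (fun u => Rr E b N L m u / b u) e :=
          eSum_one_sub (fun u => Rr E b N L m u / b u) e
        have h3 : N (L - m) e * (eSum (fun u => Rr E b N L m u / b u) e - 1)
            ≤ qE E b N L m e := mul_le_mul_of_nonneg_left h1 (hN0 _ _)
        have h4 : N (L - m) e * (eSum (fun u => Rr E b N L m u / b u) e - 1)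
            = N (L - m) e - N (L - m) e * (2 - eSum (fun u => Rr E b N L m u / b u) e) := by
          ring
        rw [h2]
        linarith [h3, h4.symm.trans_le h3]
      calc ∑ e ∈ E, N (L - m) e
          ≤ ∑ e ∈ E, (qE E b N L m e
              + N (L - m) e * eSum (fun u => 1 - Rr E b N L m u / b u) e) :=
            Finset.sum_le_sum hper
        _ = (∑ e ∈ E, qE E b N L m e)
              + ∑ e ∈ E, N (L - m) e * eSum (fun u => 1 - Rr E b N L m u / b u) e := by
            rw [Finset.sum_add_distrib]
        _ ≤ (∑ e ∈ E, qE E b N L m e) + ∑ v, (b v - Rr E b N L m v) := by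
            have hdc := dcount E hE (N (L - m)) (fun u => 1 - Rr E b N L m u / b u)
            rw [hdc]
            have : ∑ v, (1 - Rr E b N L m v / b v) * ∑ e ∈ E.filter (fun e => v ∈ e), N (L - m) e
                ≤ ∑ v, (b v - Rr E b N L m v) := by
              refine Finset.sum_le_sum fun v _ => ?_
              have h5 : (1 - Rr E b N L m v / b v) * ∑ e ∈ E.filter (fun e => v ∈ e), N (L - m) e
                  ≤ (1 - Rr E b N L m v / b v) * b v :=
                mul_le_mul_of_nonneg_left (hNdeg _ v) (hf0 v)
              have h6 : (1 - Rr E b N L m v / b v) * b v = b v - Rr E b N L m v := by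
                have : Rr E b N L m v / b v * b v = Rr E b N L m v :=
                  div_mul_cancel₀ _ (ne_of_gt (hbpos v))
                nlinarith [this]
              linarith
            linarith
    have hQsum : ∀ m, ∑ v, Qv E b N L m v = 2 * ∑ e ∈ E, qE E b N L m e := by
      intro m
      have hdc := dcount E hE (qE E b N L m) (fun _ => (1:ℝ))
      have h1 : ∑ e ∈ E, qE E b N L m e * eSum (fun _ => (1:ℝ)) e
          = 2 * ∑ e ∈ E, qE E b N L m e := by
        rw [Finset.mul_sum]
        exact Finset.sum_congr rfl fun e _ => by rw [eSum_two]; ring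
      rw [h1] at hdc
      have h2 : ∑ v, Qv E b N L m v
          = ∑ v, 1 * ∑ e ∈ E.filter (fun e => v ∈ e), qE E b N L m e :=
        Finset.sum_congr rfl fun v _ => by rw [one_mul]; rfl
      rw [h2, ← hdc]
    have hLost : ε * ∑ m ∈ range (L + 1), (1 + ε) ^ (L - m) * ∑ v, (b v - Rr E b N L m v)
        ≤ 2 * ∑ m ∈ range (L + 1), (1 + ε) ^ (L - m) * ∑ e ∈ E, qE E b N L m e := by
      have h1 : ∑ m ∈ range (L + 1), (1 + ε) ^ (L - m) * ∑ v, (b v - Rr E b N L m v)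
          = ∑ v, ∑ m ∈ range (L + 1), ∑ m' ∈ range m, (1 + ε) ^ (L - m) * Qv E b N L m' v := by
        calc ∑ m ∈ range (L + 1), (1 + ε) ^ (L - m) * ∑ v, (b v - Rr E b N L m v)
            = ∑ m ∈ range (L + 1), ∑ v, ∑ m' ∈ range m, (1 + ε) ^ (L - m) * Qv E b N L m' v := by
              refine Finset.sum_congr rfl fun m _ => ?_
              rw [Finset.mul_sum]
              refine Finset.sum_congr rfl fun v _ => ?_
              have hsub : b v - Rr E b N L m v = ∑ m' ∈ range m, Qv E b N L m' v := by
                rw [Rr_eq_sub E b N L m v]; ring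
              rw [hsub, Finset.mul_sum]
          _ = ∑ v, ∑ m ∈ range (L + 1), ∑ m' ∈ range m, (1 + ε) ^ (L - m) * Qv E b N L m' v :=
              Finset.sum_comm
      have h2 : ∀ v, ε * ∑ m ∈ range (L + 1), ∑ m' ∈ range m, (1 + ε) ^ (L - m) * Qv E b N L m' v
          ≤ ∑ m' ∈ range (L + 1), (1 + ε) ^ (L - m') * Qv E b N L m' v := by
        intro v
        rw [swap_helper (fun m m' => (1 + ε) ^ (L - m) * Qv E b N L m' v) (L + 1)]
        rw [Finset.mul_sum]
        refine Finset.sum_le_sum fun m' _ => ?_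
        have hfac : ∑ m ∈ Ico (m' + 1) (L + 1), (1 + ε) ^ (L - m) * Qv E b N L m' v
            = (∑ m ∈ Ico (m' + 1) (L + 1), (1 + ε) ^ (L - m)) * Qv E b N L m' v := by
          rw [Finset.sum_mul]
        rw [hfac, ← mul_assoc]
        exact mul_le_mul_of_nonneg_right (geo_bound hε m' L) (hQv0 m' v)
      calc ε * ∑ m ∈ range (L + 1), (1 + ε) ^ (L - m) * ∑ v, (b v - Rr E b N L m v)
          = ∑ v, ε * ∑ m ∈ range (L + 1), ∑ m' ∈ range m, (1 + ε) ^ (L - m) * Qv E b N L m' v := by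
            rw [h1, Finset.mul_sum]
        _ ≤ ∑ v, ∑ m' ∈ range (L + 1), (1 + ε) ^ (L - m') * Qv E b N L m' v :=
            Finset.sum_le_sum fun v _ => h2 v
        _ = ∑ m' ∈ range (L + 1), (1 + ε) ^ (L - m') * ∑ v, Qv E b N L m' v := by
            rw [Finset.sum_comm]
            exact Finset.sum_congr rfl fun m' _ => by rw [Finset.mul_sum]
        _ = 2 * ∑ m ∈ range (L + 1), (1 + ε) ^ (L - m) * ∑ e ∈ E, qE E b N L m e := by
            rw [Finset.mul_sum]
            exact Finset.sum_congr rfl fun m _ => by rw [hQsum m]; ring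
    have hVal0 : 0 ≤ ∑ m ∈ range (L + 1), (1 + ε) ^ (L - m) * ∑ e ∈ E, qE E b N L m e :=
      Finset.sum_nonneg fun m _ =>
        mul_nonneg (hw0 _) (Finset.sum_nonneg fun e _ => hq0 m e)
    have hA : ∑ m ∈ range (L + 1), (1 + ε) ^ (L - m) * ∑ e ∈ E, N (L - m) e
        ≤ (∑ m ∈ range (L + 1), (1 + ε) ^ (L - m) * ∑ e ∈ E, qE E b N L m e)
          + ∑ m ∈ range (L + 1), (1 + ε) ^ (L - m) * ∑ v, (b v - Rr E b N L m v) := by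
      rw [← Finset.sum_add_distrib]
      refine Finset.sum_le_sum fun m _ => ?_
      have := mul_le_mul_of_nonneg_left (hstage m) (hw0 (L - m))
      rw [mul_add] at this
      exact this
    rw [hVal]
    have hεA := mul_le_mul_of_nonneg_left hA hε.le
    rw [mul_add] at hεA
    have hεV : ε * ∑ m ∈ range (L + 1), (1 + ε) ^ (L - m) * ∑ e ∈ E, qE E b N L m e
        ≤ ∑ m ∈ range (L + 1), (1 + ε) ^ (L - m) * ∑ e ∈ E, qE E b N L m e := by
      nlinarith [hVal0]
    linarith

end Greedy
end AuxInitialDual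


/-- initial solution, Lemma 21: from per-level maximal uncapacitated
`b`-matchings one constructs nonnegative `x_i`, `x_{i(k)}` covering every discretized
edge up to `(1−ε₀)`, bounded by `ŵ_k`, dominated by `x_i`, and whose cost
`∑ b_i x_i` lies in `[β^b/a_e, β^b/4]`. -/
theorem initial_dual_solution
    {V : Type*} [Fintype V] [DecidableEq V]
    (G : SimpleGraph V) [DecidableRel G.Adj]
    (b : V → ℤ) (hb : ∀ i, 1 ≤ b i)
    (ε : ℝ) (hε0 : 0 < ε) (hε1 : ε ≤ 1 / 16)
    (lev : Sym2 V → ℕ) (K : Finset ℕ) (hK : K = G.edgeFinset.image lev)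
    -- β^b: the bipartite relaxation value with discretized weights ŵ
    (βb : ℝ)
    (hβb : IsGreatest
      {v | ∃ y : Sym2 V → ℝ,
        (∀ e ∈ G.edgeFinset, 0 ≤ y e) ∧
        (∀ i : V, ∑ e ∈ G.edgeFinset.filter (fun e => i ∈ e), y e ≤ (b i : ℝ)) ∧
        v = ∑ e ∈ G.edgeFinset, (1 + ε) ^ (lev e) * y e} βb)
    -- per-level maximal uncapacitated b-matchings `M_k` of `Ê_k`
    (M : ℕ → Sym2 V → ℕ)
    (hMsupp : ∀ k, ∀ e, M k e ≠ 0 → e ∈ G.edgeFinset ∧ lev e = k)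
    (hMdeg : ∀ k ∈ K, ∀ i : V,
      ∑ e ∈ G.edgeFinset.filter (fun e => lev e = k ∧ i ∈ e), (M k e : ℤ) ≤ b i)
    (hMmax : ∀ k ∈ K, ∀ e ∈ G.edgeFinset.filter (fun e => lev e = k),
      ∃ i, i ∈ e ∧
        (b i : ℤ) <
          (∑ e' ∈ G.edgeFinset.filter (fun e' => lev e' = k ∧ i ∈ e'), (M k e' : ℤ)) + 1) :
    ∃ (x : V → ℝ) (xk : V → ℕ → ℝ),
      (∀ i, 0 ≤ x i) ∧
      (∀ i, ∀ k ∈ K, 0 ≤ xk i k) ∧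
      -- x_{i(k)} + x_{j(k)} ≥ (1−ε₀)·ŵ_k for every (i,j) ∈ Ê_k, where ε₀ = 1 − ε/256
      (∀ i j : V, G.Adj i j →
        xk i (lev s(i, j)) + xk j (lev s(i, j))
          ≥ (1 - (1 - ε / 256)) * (1 + ε) ^ (lev s(i, j))) ∧
      -- x_{i(k)} ≤ ŵ_k
      (∀ i, ∀ k ∈ K, xk i k ≤ (1 + ε) ^ k) ∧
      -- x_i ≥ x_{i(k)}
      (∀ i, ∀ k ∈ K, xk i k ≤ x i) ∧
      -- β^b/a_e ≤ ∑ b_i x_i ≤ β^b/4, with a_e = 2048·ε⁻²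
      βb / (2048 * ε⁻¹ * ε⁻¹) ≤ ∑ i, (b i : ℝ) * x i ∧
      ∑ i, (b i : ℝ) * x i ≤ βb / 4 := by
  classical
  have hε1' : ε ≤ 1 := le_trans hε1 (by norm_num)
  set E := G.edgeFinset with hEdef
  set bR : V → ℝ := fun v => (b v : ℝ) with hbRdef
  set N : ℕ → Sym2 V → ℝ := fun k e => (M k e : ℝ) with hNdef
  set L : ℕ := K.sup id with hLdef
  have hbR : ∀ v, (1:ℝ) ≤ bR v := fun v => by
    simp only [hbRdef]
    exact_mod_cast hb v
  have hbR0 : ∀ v, (0:ℝ) ≤ bR v := fun v => le_trans zero_le_one (hbR v)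
  have hE : ∀ e ∈ E, ¬ e.IsDiag := fun e he =>
    G.not_isDiag_of_mem_edgeSet (SimpleGraph.mem_edgeFinset.mp he)
  have hlevK : ∀ e ∈ E, lev e ∈ K := fun e he => by
    rw [hK]; exact Finset.mem_image_of_mem lev he
  have hMzero : ∀ k e, lev e ≠ k → M k e = 0 := by
    intro k e hne
    by_contra h
    exact hne (hMsupp k e h).2
  have hN0 : ∀ k e, 0 ≤ N k e := fun k e => by positivity
  have hNlev : ∀ k e, N k e ≠ 0 → lev e = k := fun k e h =>
    (hMsupp k e (fun h0 => h (by simp [hNdef, h0]))).2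
  -- degree sums over incident edges
  have hfiltereq : ∀ k v, ∑ e ∈ E.filter (fun e => v ∈ e), N k e
      = ∑ e ∈ E.filter (fun e => lev e = k ∧ v ∈ e), N k e := by
    intro k v
    refine (Finset.sum_subset ?_ ?_).symm
    · intro e he
      rw [Finset.mem_filter] at he ⊢
      exact ⟨he.1, he.2.2⟩
    · intro e he hne
      rw [Finset.mem_filter] at he hne
      have : lev e ≠ k := by
        intro hl
        exact hne ⟨he.1, hl, he.2⟩
      simp [hNdef, hMzero k e this]
  have hdeg_int : ∀ k ∈ K, ∀ v,
      ∑ e ∈ E.filter (fun e => lev e = k ∧ v ∈ e), N k e ≤ bR v := by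
    intro k hk v
    have h := hMdeg k hk v
    have : ((∑ e ∈ E.filter (fun e => lev e = k ∧ v ∈ e), (M k e : ℤ) : ℤ) : ℝ)
        ≤ ((b v : ℤ) : ℝ) := by exact_mod_cast h
    push_cast at this
    exact this
  have hNdeg : ∀ k v, ∑ e ∈ E.filter (fun e => v ∈ e), N k e ≤ bR v := by
    intro k v
    by_cases hk : k ∈ K
    · rw [hfiltereq k v]; exact hdeg_int k hk v
    · have hz : ∑ e ∈ E.filter (fun e => v ∈ e), N k e = 0 := by
        refine Finset.sum_eq_zero fun e he => ?_
        rw [Finset.mem_filter] at he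
        have : lev e ≠ k := fun hl => hk (hl ▸ hlevK e he.1)
        simp [hNdef, hMzero k e this]
      rw [hz]; exact le_trans zero_le_one (hbR v)
  -- the greedy combined fractional b-matching
  obtain ⟨y, hy0, hyfeas, hymain⟩ :=
    greedy_main E bR N L hbR hN0 hNdeg ε hε0 hε1' lev hE hNlev
  have hValβ : ∑ e ∈ E, (1 + ε) ^ (lev e) * y e ≤ βb :=
    hβb.2 ⟨y, fun e _ => hy0 e, hyfeas, rfl⟩
  have hβb0 : (0:ℝ) ≤ βb := by
    refine hβb.2 ⟨fun _ => 0, fun e _ => le_refl 0, fun i => ?_, by simp⟩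
    simp only [Finset.sum_const_zero]
    exact le_trans zero_le_one (hbR i)
  -- A in level form
  have hAmk : ∑ m ∈ range (L + 1), (1 + ε) ^ (L - m) * ∑ e ∈ E, N (L - m) e
      = ∑ k ∈ range (L + 1), (1 + ε) ^ k * ∑ e ∈ E, N k e := by
    have := Finset.sum_range_reflect (fun k => (1 + ε) ^ k * ∑ e ∈ E, N k e) (L + 1)
    simpa using this
  -- saturation weights
  set dg : ℕ → V → ℝ := fun k v => ∑ e ∈ E.filter (fun e => v ∈ e), N k e with hdgdef
  set satS : V → Finset ℕ := fun v => K.filter (fun k => bR v ≤ dg k v) with hsatdef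
  set x' : V → ℝ := fun v =>
    if h : (satS v).Nonempty then (1 + ε) ^ ((satS v).max' h) else 0 with hx'def
  have hx'0 : ∀ v, 0 ≤ x' v := by
    intro v
    simp only [hx'def]
    split
    · positivity
    · exact le_refl 0
  have hx'ge : ∀ v k, k ∈ satS v → (1 + ε) ^ k ≤ x' v := by
    intro v k hk
    simp only [hx'def]
    rw [dif_pos ⟨k, hk⟩]
    exact pow_le_pow_right₀ (by linarith) (Finset.le_max' _ k hk)
  have hdg0 : ∀ k v, 0 ≤ dg k v :=
    fun k v => Finset.sum_nonneg fun e _ => hN0 k e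
  -- every edge has a saturated endpoint at its level
  have hsat_edge : ∀ e ∈ E, ∃ v, v ∈ e ∧ lev e ∈ satS v := by
    intro e he
    have hk : lev e ∈ K := hlevK e he
    obtain ⟨i, hie, hlt⟩ := hMmax (lev e) hk e (Finset.mem_filter.mpr ⟨he, rfl⟩)
    have hle : (b i : ℤ) ≤ ∑ e' ∈ E.filter (fun e' => lev e' = lev e ∧ i ∈ e'), (M (lev e) e' : ℤ) :=
      Int.lt_add_one_iff.mp hlt
    have hleR : bR i ≤ ∑ e' ∈ E.filter (fun e' => lev e' = lev e ∧ i ∈ e'), N (lev e) e' := by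
      have : ((b i : ℤ) : ℝ) ≤ ((∑ e' ∈ E.filter (fun e' => lev e' = lev e ∧ i ∈ e'),
          (M (lev e) e' : ℤ) : ℤ) : ℝ) := by exact_mod_cast hle
      push_cast at this
      exact this
    refine ⟨i, hie, Finset.mem_filter.mpr ⟨hk, ?_⟩⟩
    rw [hdgdef]
    simp only
    rw [hfiltereq]
    exact hleR
  -- weak duality: βb ≤ S
  set S : ℝ := ∑ v, bR v * x' v with hSdef
  have hS0 : 0 ≤ S := Finset.sum_nonneg fun v _ => mul_nonneg (hbR0 v) (hx'0 v)
  have hβbS : βb ≤ S := by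
    obtain ⟨y', hy'0, hy'c, hy'v⟩ := hβb.1
    rw [hy'v]
    calc ∑ e ∈ E, (1 + ε) ^ (lev e) * y' e
        ≤ ∑ e ∈ E, y' e * eSum x' e := by
          refine Finset.sum_le_sum fun e he => ?_
          obtain ⟨v, hv, hvs⟩ := hsat_edge e he
          have h1 : (1 + ε) ^ (lev e) ≤ eSum x' e :=
            le_trans (hx'ge v (lev e) hvs) (eSum_le_of_mem hx'0 hv)
          calc (1 + ε) ^ (lev e) * y' e ≤ eSum x' e * y' e :=
                mul_le_mul_of_nonneg_right h1 (hy'0 e he)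
            _ = y' e * eSum x' e := mul_comm _ _
      _ = ∑ v, x' v * ∑ e ∈ E.filter (fun e => v ∈ e), y' e := dcount E hE y' x'
      _ ≤ ∑ v, x' v * bR v :=
          Finset.sum_le_sum fun v _ => mul_le_mul_of_nonneg_left (hy'c v) (hx'0 v)
      _ = S := Finset.sum_congr rfl fun v _ => mul_comm _ _
  -- S ≤ 2 A
  have hS2A : S ≤ 2 * ∑ k ∈ range (L + 1), (1 + ε) ^ k * ∑ e ∈ E, N k e := by
    have hperv : ∀ v, bR v * x' v ≤ ∑ k ∈ range (L + 1), (1 + ε) ^ k * dg k v := by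
      intro v
      have hterms : ∀ k ∈ range (L + 1), 0 ≤ (1 + ε) ^ k * dg k v :=
        fun k _ => mul_nonneg (by positivity) (hdg0 k v)
      simp only [hx'def]
      split
      · rename_i h
        set k' := (satS v).max' h with hk'def
        have hk'mem : k' ∈ satS v := (satS v).max'_mem h
        rw [hsatdef] at hk'mem
        simp only [Finset.mem_filter] at hk'mem
        have hk'L : k' ∈ range (L + 1) := by
          rw [Finset.mem_range, Nat.lt_succ_iff, hLdef]
          exact Finset.le_sup (f := id) hk'mem.1
        calc bR v * (1 + ε) ^ k' ≤ (1 + ε) ^ k' * dg k' v := by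
              rw [mul_comm]
              exact mul_le_mul_of_nonneg_left hk'mem.2 (by positivity)
          _ ≤ ∑ k ∈ range (L + 1), (1 + ε) ^ k * dg k v :=
              Finset.single_le_sum hterms hk'L
      · rw [mul_zero]
        exact Finset.sum_nonneg hterms
    have hdgsum : ∀ k, ∑ v, dg k v = 2 * ∑ e ∈ E, N k e := by
      intro k
      have hdc := dcount E hE (N k) (fun _ => (1:ℝ))
      have h1 : ∑ e ∈ E, N k e * eSum (fun _ => (1:ℝ)) e = 2 * ∑ e ∈ E, N k e := by
        rw [Finset.mul_sum]
        exact Finset.sum_congr rfl fun e _ => by rw [eSum_two]; ring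
      calc ∑ v, dg k v
          = ∑ v, 1 * ∑ e ∈ E.filter (fun e => v ∈ e), N k e :=
            Finset.sum_congr rfl fun v _ => by simp only [hdgdef]; rw [one_mul]
        _ = ∑ e ∈ E, N k e * eSum (fun _ => (1:ℝ)) e := hdc.symm
        _ = 2 * ∑ e ∈ E, N k e := h1
    calc S ≤ ∑ v, ∑ k ∈ range (L + 1), (1 + ε) ^ k * dg k v :=
          Finset.sum_le_sum fun v _ => hperv v
      _ = ∑ k ∈ range (L + 1), (1 + ε) ^ k * ∑ v, dg k v := by
          rw [Finset.sum_comm]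
          exact Finset.sum_congr rfl fun k _ => by rw [Finset.mul_sum]
      _ = 2 * ∑ k ∈ range (L + 1), (1 + ε) ^ k * ∑ e ∈ E, N k e := by
          rw [Finset.mul_sum]
          exact Finset.sum_congr rfl fun k _ => by rw [hdgsum k]; ring
  -- key bound : ε S ≤ 6 βb
  have hεS : ε * S ≤ 6 * βb := by
    have h1 : ε * ∑ k ∈ range (L + 1), (1 + ε) ^ k * ∑ e ∈ E, N k e
        ≤ 3 * ∑ e ∈ E, (1 + ε) ^ (lev e) * y e := by
      rw [← hAmk]; exact hymain
    have h2 : ε * S ≤ ε * (2 * ∑ k ∈ range (L + 1), (1 + ε) ^ k * ∑ e ∈ E, N k e) :=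
      mul_le_mul_of_nonneg_left hS2A hε0.le
    have h3 : ε * (2 * ∑ k ∈ range (L + 1), (1 + ε) ^ k * ∑ e ∈ E, N k e)
        = 2 * (ε * ∑ k ∈ range (L + 1), (1 + ε) ^ k * ∑ e ∈ E, N k e) := by ring
    linarith
  -- construct the dual solution
  refine ⟨fun v => ε / 256 * x' v,
    fun v k => if k ∈ K ∧ bR v ≤ dg k v then ε / 256 * (1 + ε) ^ k else 0,
    ?_, ?_, ?_, ?_, ?_, ?_, ?_⟩
  · intro v
    exact mul_nonneg (by linarith) (hx'0 v)
  · intro v k _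
    dsimp only
    split
    · positivity
    · exact le_refl 0
  · -- covering
    intro i j hadj
    have he : s(i, j) ∈ E := SimpleGraph.mem_edgeFinset.mpr hadj
    obtain ⟨v, hv, hvs⟩ := hsat_edge s(i, j) he
    rw [hsatdef] at hvs
    simp only [Finset.mem_filter] at hvs
    have hxkv : (if lev s(i, j) ∈ K ∧ bR v ≤ dg (lev s(i, j)) v then
        ε / 256 * (1 + ε) ^ (lev s(i, j)) else 0) = ε / 256 * (1 + ε) ^ (lev s(i, j)) :=
      if_pos ⟨hvs.1, hvs.2⟩
    have hother : ∀ u k, (0:ℝ) ≤ if k ∈ K ∧ bR u ≤ dg k u then ε / 256 * (1 + ε) ^ k else 0 := by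
      intro u k
      split
      · positivity
      · exact le_refl 0
    have hring : (1 - (1 - ε / 256)) * (1 + ε) ^ (lev s(i, j))
        = ε / 256 * (1 + ε) ^ (lev s(i, j)) := by ring
    dsimp only
    rw [ge_iff_le, hring]
    rcases Sym2.mem_iff.mp hv with h | h
    · rw [h] at hxkv
      rw [hxkv]
      linarith [hother j (lev s(i, j))]
    · rw [h] at hxkv
      rw [hxkv]
      linarith [hother i (lev s(i, j))]
  · -- xk ≤ ŵ_k
    intro v k _
    dsimp only
    split
    · exact mul_le_of_le_one_left (by positivity) (by linarith)
    · positivity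
  · -- xk ≤ x
    intro v k _
    dsimp only
    split
    · rename_i h
      have hmem : k ∈ satS v := by
        rw [hsatdef]
        exact Finset.mem_filter.mpr ⟨h.1, h.2⟩
      exact mul_le_mul_of_nonneg_left (hx'ge v k hmem) (by linarith)
    · exact mul_nonneg (by linarith) (hx'0 v)
  · -- lower bound
    have hcost : ∑ v, bR v * (ε / 256 * x' v) = ε / 256 * S := by
      rw [hSdef, Finset.mul_sum]
      exact Finset.sum_congr rfl fun v _ => by ring
    rw [show (∑ v, (b v : ℝ) * (ε / 256 * x' v)) = ε / 256 * S from hcost]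
    have hD : (0:ℝ) < 2048 * ε⁻¹ * ε⁻¹ := by positivity
    rw [div_le_iff₀ hD]
    have hfac : ε / 256 * S * (2048 * ε⁻¹ * ε⁻¹) = S * (8 / ε) := by
      field_simp
      ring
    rw [hfac]
    have h8 : (1:ℝ) ≤ 8 / ε := by
      rw [le_div_iff₀ hε0]
      linarith
    calc βb ≤ S := hβbS
      _ = S * 1 := by ring
      _ ≤ S * (8 / ε) := mul_le_mul_of_nonneg_left h8 hS0
  · -- upper bound
    have hcost : ∑ v, bR v * (ε / 256 * x' v) = ε / 256 * S := by
      rw [hSdef, Finset.mul_sum]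
      exact Finset.sum_congr rfl fun v _ => by ring
    rw [show (∑ v, (b v : ℝ) * (ε / 256 * x' v)) = ε / 256 * S from hcost]
    have : ε / 256 * S = ε * S / 256 := by ring
    rw [this]
    linarith
end

section
/- Let G=(V,E) be a finite simple graph with |V| = n ≥ 1 and let 0 < q ≤ 1. Sample each edge of E independently with probability q. Then with probability at least 1 − e^{−n}, for every vertex subset S ⊆ V whose induced edge set E(S) = {(i,j) ∈ E : i,j ∈ S} has |E(S)| ≥ 2n/q, at least one edge of E(S) is sampled. -/
open Finset MeasureTheory
open scoped Classical ENNReal NNReal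

/-!
For a fixed vertex set `S` with `m ≥ 2n/q` induced edges, all of them are missed with probability
`(1 - q)^m ≤ e^{-qm} ≤ e^{-2n}`. A union bound over the `2^n ≤ e^n` vertex sets bounds the
probability that some dense `S` is missed by `e^{-n}`.
-/

set_option linter.deprecated false

theorem measure_pi_bernoulli_forall_eq_false {ι : Type*} [Fintype ι] (p : ℝ≥0) (hp : p ≤ 1)
    (s : Finset ι) :
    Measure.pi (fun _ : ι => (PMF.bernoulli p hp).toMeasure) {ω | ∀ i ∈ s, ω i = false}
      = (1 - p : ℝ≥0∞) ^ s.card := by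
  have hset : {ω : ι → Bool | ∀ i ∈ s, ω i = false} = (s : Set ι).pi fun _ => {false} := by
    ext ω; simp
  rw [hset, Measure.pi_pi_finset, PMF.toMeasure_apply_singleton _ _ (measurableSet_singleton _),
    PMF.bernoulli_apply, Finset.prod_const]
  rfl

theorem one_sub_card_mul_le_measure_forall_notMem {Ω ι : Type*} [MeasurableSpace Ω] [Fintype ι]
    (μ : Measure Ω) [IsProbabilityMeasure μ] (P : ι → Prop) (B : ι → Set Ω) {δ : ℝ≥0∞}
    (hB : ∀ i, P i → μ (B i) ≤ δ) :
    1 - Fintype.card ι * δ ≤ μ {ω | ∀ i, P i → ω ∉ B i} := by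
  set bad := ⋃ i, ⋃ (_ : P i), B i
  have hgood : {ω | ∀ i, P i → ω ∉ B i} = badᶜ := by ext ω; simp [bad]
  have hbad : μ bad ≤ Fintype.card ι * δ := calc
    μ bad ≤ ∑ i, μ (⋃ (_ : P i), B i) := measure_iUnion_fintype_le μ _
    _ ≤ ∑ _ : ι, δ := by
      gcongr with i
      by_cases hi : P i
      · simpa [hi] using hB i hi
      · simp [hi]
    _ = Fintype.card ι * δ := by simp
  have hsplit : 1 ≤ μ bad + μ badᶜ := by
    simpa [Set.union_compl_self] using measure_union_le (μ := μ) bad badᶜ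
  rw [hgood]
  exact (tsub_le_tsub_left hbad 1).trans (tsub_le_iff_left.mpr hsplit)

theorem Real.one_sub_pow_le_exp_neg_mul {q : ℝ} (hq : q ≤ 1) (m : ℕ) :
    (1 - q) ^ m ≤ Real.exp (-(q * m)) := by
  calc (1 - q) ^ m ≤ Real.exp (-q) ^ m := pow_le_pow_left₀ (by linarith) (one_sub_le_exp_neg q) m
    _ = Real.exp (-(q * m)) := by rw [← Real.exp_nat_mul]; ring_nf

theorem two_pow_mul_exp_neg_two_mul_le_exp_neg (n : ℕ) :
    2 ^ n * Real.exp (-(2 * n)) ≤ Real.exp (-n) := by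
  have h2 : (2 : ℝ) ^ n ≤ Real.exp n := by
    calc (2 : ℝ) ^ n ≤ Real.exp 1 ^ n := by
          gcongr; linarith [Real.add_one_le_exp 1]
      _ = Real.exp n := by rw [← Real.exp_nat_mul, mul_one]
  calc 2 ^ n * Real.exp (-(2 * n)) ≤ Real.exp n * Real.exp (-(2 * n)) := by gcongr
    _ = Real.exp (-n) := by rw [← Real.exp_add]; ring_nf

theorem card_filter_univ_subtype_mem {α : Type*} (s : Finset α) (P : α → Prop) [DecidablePred P] :
    (univ.filter fun x : s => P x.1).card = (s.filter P).card := by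
  rw [Finset.univ_eq_attach, Finset.filter_attach, Finset.card_map, Finset.card_attach]

theorem measure_no_sampled_induced_edge_le {V : Type*} [Fintype V] [DecidableEq V]
    (G : SimpleGraph V) [DecidableRel G.Adj] {q : ℝ} (hq0 : 0 < q) (hq1 : q ≤ 1)
    (S : Finset V) {t : ℝ}
    (hS : t / q ≤ ((G.edgeFinset.filter (fun e => ∀ v ∈ e, v ∈ S)).card : ℝ)) :
    (Measure.pi (fun _ : {e : Sym2 V // e ∈ G.edgeFinset} =>
        (PMF.bernoulli (Real.toNNReal q) (Real.toNNReal_le_one.mpr hq1)).toMeasure))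
        {ω | ∀ e ∈ univ.filter (fun e : G.edgeFinset => ∀ v ∈ e.1, v ∈ S), ω e = false}
      ≤ ENNReal.ofReal (Real.exp (-t)) := by
  rw [measure_pi_bernoulli_forall_eq_false,
    card_filter_univ_subtype_mem G.edgeFinset (fun e => ∀ v ∈ e, v ∈ S)]
  set m := (G.edgeFinset.filter (fun e => ∀ v ∈ e, v ∈ S)).card
  have hqm : t ≤ q * m := by rwa [div_le_iff₀' hq0] at hS
  calc (1 - ENNReal.ofReal q) ^ m = ENNReal.ofReal ((1 - q) ^ m) := by
        rw [ENNReal.ofReal_pow (by linarith), ENNReal.ofReal_sub _ hq0.le, ENNReal.ofReal_one]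
    _ ≤ ENNReal.ofReal (Real.exp (-(q * m))) :=
        ENNReal.ofReal_le_ofReal (Real.one_sub_pow_le_exp_neg_mul hq1 m)
    _ ≤ ENNReal.ofReal (Real.exp (-t)) := by gcongr

theorem sampling_hits_dense_induced_subgraphs_general
    {V : Type*} [Fintype V] [DecidableEq V]
    (G : SimpleGraph V) [DecidableRel G.Adj]
    (q : ℝ) (hq0 : 0 < q) (hq1 : q ≤ 1) :
    (Measure.pi (fun _ : {e : Sym2 V // e ∈ G.edgeFinset} =>
        (PMF.bernoulli (Real.toNNReal q) (Real.toNNReal_le_one.mpr hq1)).toMeasure))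
      {ω | ∀ S : Finset V,
        2 * (Fintype.card V : ℝ) / q ≤
            ((G.edgeFinset.filter (fun e => ∀ v ∈ e, v ∈ S)).card : ℝ) →
        ∃ e : {e : Sym2 V // e ∈ G.edgeFinset}, (∀ v ∈ e.1, v ∈ S) ∧ ω e = true}
      ≥ ENNReal.ofReal (1 - Real.exp (-(Fintype.card V : ℝ))) := by
  set n := Fintype.card V
  have hunion := one_sub_card_mul_le_measure_forall_notMem _ _ _
    (measure_no_sampled_induced_edge_le G hq0 hq1 (t := 2 * n))
  rw [Fintype.card_finset, Nat.cast_pow, Nat.cast_ofNat] at hunion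
  have hbound :
      ENNReal.ofReal (1 - Real.exp (-n)) ≤ 1 - 2 ^ n * ENNReal.ofReal (Real.exp (-(2 * n))) := by
    rw [ENNReal.ofReal_sub _ (Real.exp_pos _).le, ENNReal.ofReal_one, ← ENNReal.ofReal_ofNat,
      ← ENNReal.ofReal_pow zero_le_two, ← ENNReal.ofReal_mul (by positivity)]
    gcongr
    exact two_pow_mul_exp_neg_two_mul_le_exp_neg n
  refine hbound.trans (hunion.trans (measure_mono fun ω hω S hS => ?_))
  by_contra hhit
  exact hω S hS fun e he => by simpa using fun hin => hhit ⟨e, (mem_filter.mp he).2, hin⟩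

/-- Lemma 3.1 of Lattanzi et al.: sampling each edge independently
with probability `q`, with probability at least `1 − e^{−n}` every vertex subset
whose induced subgraph has at least `2n/q` edges has a sampled edge. -/
theorem sampling_hits_dense_induced_subgraphs
    {V : Type*} [Fintype V] [DecidableEq V]
    (G : SimpleGraph V) [DecidableRel G.Adj]
    (hn : 1 ≤ Fintype.card V)
    (q : ℝ) (hq0 : 0 < q) (hq1 : q ≤ 1) :
    (Measure.pi (fun _ : {e : Sym2 V // e ∈ G.edgeFinset} =>
        (PMF.bernoulli (Real.toNNReal q) (Real.toNNReal_le_one.mpr hq1)).toMeasure))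
      {ω | ∀ S : Finset V,
        2 * (Fintype.card V : ℝ) / q ≤
            ((G.edgeFinset.filter (fun e => ∀ v ∈ e, v ∈ S)).card : ℝ) →
        ∃ e : {e : Sym2 V // e ∈ G.edgeFinset}, (∀ v ∈ e.1, v ∈ S) ∧ ω e = true}
      ≥ ENNReal.ofReal (1 - Real.exp (-(Fintype.card V : ℝ))) :=
  sampling_hits_dense_induced_subgraphs_general G q hq0 hq1
end

section
/- Let G=(V,E) be a finite simple graph with edge weights w : E → ℝ_{≥0}, b : V → ℤ with b_i ≥ 1, and 0 < ε ≤ 1. Let β* be the b-matching LP value of (G,w) (using all odd-set constraints, U ∈ 𝒪), and let β*_s be the value of the same LP in which the odd-set constraints ∑_{(i,j)∈E: i,j∈U} y_{ij} ≤ ⌊‖U‖_b/2⌋ are imposed only for U ∈ 𝒪_s = {U ∈ 𝒪 : ‖U‖_b ≤ 4/ε}. Then β* ≤ β*_s ≤ (1+ε)·β*. -/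
/-! Any solution of the full LP is feasible for the relaxed one, so `β* ≤ β*_s`. Conversely,
scaling a solution `y` of the relaxed LP by `1/(1+ε)` keeps the degree and small odd-set
constraints. For a large odd set `U` with `‖U‖_b = 2k+1 > 4/ε`, double counting the degree
constraints over `U` gives `y(E[U]) ≤ k + 1/2`, and `k + 1/2 ≤ (1+ε) k` because `ε ≤ 1`
forces `εk > 3/2`. Hence `y/(1+ε)` is feasible for the full LP and `β*_s ≤ (1+ε) β*`. -/

open Finset
open scoped Classical

/-- Feasibility for the `b`-matching LP on edge set `E` where the odd-set constraints
are imposed only for the odd sets in the family `𝒰`. -/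
def BMatchFeasibleOn {V : Type*} [Fintype V] [DecidableEq V]
    (E : Finset (Sym2 V)) (b : V → ℤ) (𝒰 : Finset (Finset V))
    (y : Sym2 V → ℝ) : Prop :=
  (∀ e ∈ E, 0 ≤ y e) ∧
  (∀ i : V, ∑ e ∈ E.filter (fun e => i ∈ e), y e ≤ (b i : ℝ)) ∧
  (∀ U ∈ 𝒰, ∑ e ∈ E.filter (fun e => ∀ v ∈ e, v ∈ U), y e
      ≤ (((∑ i ∈ U, b i) / 2 : ℤ) : ℝ))

lemma le_one_add_mul_ediv_two_of_odd {ε S : ℝ} {B : ℤ} (hε0 : 0 < ε) (hε1 : ε ≤ 1)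
    (hB : Odd B) (hlarge : 4 / ε < B) (hS : 2 * S ≤ B) :
    S ≤ (1 + ε) * ((B / 2 : ℤ) : ℝ) := by
  obtain ⟨k, rfl⟩ := hB
  have hk : (2 * k + 1) / 2 = k := by omega
  rw [hk]
  push_cast at hlarge hS
  rw [div_lt_iff₀ hε0] at hlarge
  nlinarith

section
variable {V : Type*} [Fintype V] [DecidableEq V] {E : Finset (Sym2 V)} {y : Sym2 V → ℝ}

lemma two_mul_sum_filter_subset_le_sum_degree (hE : ∀ e ∈ E, ¬ e.IsDiag)
    (hy : ∀ e ∈ E, 0 ≤ y e) (U : Finset V) :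
    2 * ∑ e ∈ E.filter (fun e => ∀ v ∈ e, v ∈ U), y e
      ≤ ∑ i ∈ U, ∑ e ∈ E.filter (fun e => i ∈ e), y e := by
  have hinside : ∀ e ∈ E.filter (fun e => ∀ v ∈ e, v ∈ U),
      U.filter (fun v => v ∈ e) = e.toFinset := fun e he => by
    ext v
    simp only [mem_filter, Sym2.mem_toFinset]
    exact ⟨And.right, fun hv => ⟨(mem_filter.mp he).2 v hv, hv⟩⟩
  calc 2 * ∑ e ∈ E.filter (fun e => ∀ v ∈ e, v ∈ U), y e
      = ∑ e ∈ E.filter (fun e => ∀ v ∈ e, v ∈ U),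
          ∑ _v ∈ U.filter (fun v => v ∈ e), y e := by
        rw [mul_sum]
        refine sum_congr rfl fun e he => ?_
        rw [hinside e he, sum_const, Sym2.card_toFinset_of_not_isDiag e
          (hE e (mem_filter.mp he).1), two_nsmul, two_mul]
    _ ≤ ∑ e ∈ E, ∑ _v ∈ U.filter (fun v => v ∈ e), y e :=
        sum_le_sum_of_subset_of_nonneg (filter_subset _ E) fun e he _ =>
          sum_nonneg fun _ _ => hy e he
    _ = ∑ i ∈ U, ∑ e ∈ E.filter (fun e => i ∈ e), y e :=
        Finset.sum_comm' fun _ _ => by simp only [mem_filter]; tauto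

variable {b : V → ℤ}

lemma BMatchFeasibleOn.mono {𝒰 𝒰' : Finset (Finset V)} (h𝒰 : 𝒰 ⊆ 𝒰')
    (hy : BMatchFeasibleOn E b 𝒰' y) : BMatchFeasibleOn E b 𝒰 y :=
  ⟨hy.1, hy.2.1, fun U hU => hy.2.2 U (h𝒰 hU)⟩

lemma BMatchFeasibleOn.two_mul_sum_filter_subset_le (hE : ∀ e ∈ E, ¬ e.IsDiag)
    {𝒰 : Finset (Finset V)} (hy : BMatchFeasibleOn E b 𝒰 y) (U : Finset V) :
    2 * ∑ e ∈ E.filter (fun e => ∀ v ∈ e, v ∈ U), y e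
      ≤ ((∑ i ∈ U, b i : ℤ) : ℝ) := by
  push_cast
  exact (two_mul_sum_filter_subset_le_sum_degree hE hy.1 U).trans (sum_le_sum fun i _ => hy.2.1 i)

lemma BMatchFeasibleOn.div_one_add_of_small_oddSets (hE : ∀ e ∈ E, ¬ e.IsDiag) {ε : ℝ}
    (hε0 : 0 < ε) (hε1 : ε ≤ 1)
    (hy : BMatchFeasibleOn E b ((univ : Finset (Finset V)).filter
      (fun U => Odd (∑ i ∈ U, b i) ∧ ((∑ i ∈ U, b i : ℤ) : ℝ) ≤ 4 / ε)) y) :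
    BMatchFeasibleOn E b ((univ : Finset (Finset V)).filter (fun U => Odd (∑ i ∈ U, b i)))
      (fun e => y e / (1 + ε)) := by
  have h1ε : 0 < 1 + ε := by linarith
  have hshrink : ∀ s ⊆ E, ∑ e ∈ s, y e / (1 + ε) ≤ ∑ e ∈ s, y e := fun s hs => by
    rw [← sum_div]
    exact div_le_self (sum_nonneg fun e he => hy.1 e (hs he)) (by linarith)
  refine ⟨fun e he => div_nonneg (hy.1 e he) h1ε.le,
    fun i => (hshrink _ (filter_subset _ E)).trans (hy.2.1 i), fun U hU => ?_⟩
  have hodd : Odd (∑ i ∈ U, b i) := by simpa using hU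
  by_cases hsmall : ((∑ i ∈ U, b i : ℤ) : ℝ) ≤ 4 / ε
  · exact (hshrink _ (filter_subset _ E)).trans
      (hy.2.2 U (mem_filter.mpr ⟨mem_univ U, hodd, hsmall⟩))
  · rw [← sum_div, div_le_iff₀' h1ε]
    exact le_one_add_mul_ediv_two_of_odd hε0 hε1 hodd (not_le.mp hsmall)
      (hy.two_mul_sum_filter_subset_le hE U)

end

theorem small_oddsets_suffice_general
    {V : Type*} [Fintype V] [DecidableEq V]
    (G : SimpleGraph V) [DecidableRel G.Adj]
    (w : Sym2 V → ℝ)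
    (b : V → ℤ)
    (ε : ℝ) (hε0 : 0 < ε) (hε1 : ε ≤ 1)
    (βstar : ℝ)
    (hβstar : IsGreatest
      {v | ∃ y, BMatchFeasibleOn G.edgeFinset b
          ((univ : Finset (Finset V)).filter (fun U => Odd (∑ i ∈ U, b i))) y ∧
        v = ∑ e ∈ G.edgeFinset, w e * y e} βstar)
    (βs : ℝ)
    (hβs : IsGreatest
      {v | ∃ y, BMatchFeasibleOn G.edgeFinset b
          ((univ : Finset (Finset V)).filter
            (fun U => Odd (∑ i ∈ U, b i) ∧ ((∑ i ∈ U, b i : ℤ) : ℝ) ≤ 4 / ε)) y ∧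
        v = ∑ e ∈ G.edgeFinset, w e * y e} βs) :
    βstar ≤ βs ∧ βs ≤ (1 + ε) * βstar := by
  refine ⟨?_, ?_⟩
  · obtain ⟨y, hy, rfl⟩ := hβstar.1
    exact hβs.2 ⟨y, hy.mono fun U hU =>
      mem_filter.mpr ⟨mem_univ U, (mem_filter.mp hU).2.1⟩, rfl⟩
  · obtain ⟨y, hy, rfl⟩ := hβs.1
    have hE : ∀ e ∈ G.edgeFinset, ¬ e.IsDiag := fun e he =>
      G.not_isDiag_of_mem_edgeSet (SimpleGraph.mem_edgeFinset.mp he)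
    have hscaled := hβstar.2 ⟨_, hy.div_one_add_of_small_oddSets hE hε0 hε1, rfl⟩
    simp only [mul_div_assoc', ← sum_div] at hscaled
    rwa [div_le_iff₀' (by linarith)] at hscaled

/-- imposing the odd-set constraints only on odd sets of `b`-size at
most `4/ε` changes the `b`-matching LP value by at most a `(1+ε)` factor. -/
theorem small_oddsets_suffice
    {V : Type*} [Fintype V] [DecidableEq V]
    (G : SimpleGraph V) [DecidableRel G.Adj]
    (w : Sym2 V → ℝ) (hw : ∀ e ∈ G.edgeFinset, 0 ≤ w e)
    (b : V → ℤ) (hb : ∀ i, 1 ≤ b i)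
    (ε : ℝ) (hε0 : 0 < ε) (hε1 : ε ≤ 1)
    (βstar : ℝ)
    (hβstar : IsGreatest
      {v | ∃ y, BMatchFeasibleOn G.edgeFinset b
          ((univ : Finset (Finset V)).filter (fun U => Odd (∑ i ∈ U, b i))) y ∧
        v = ∑ e ∈ G.edgeFinset, w e * y e} βstar)
    (βs : ℝ)
    (hβs : IsGreatest
      {v | ∃ y, BMatchFeasibleOn G.edgeFinset b
          ((univ : Finset (Finset V)).filter
            (fun U => Odd (∑ i ∈ U, b i) ∧ ((∑ i ∈ U, b i : ℤ) : ℝ) ≤ 4 / ε)) y ∧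
        v = ∑ e ∈ G.edgeFinset, w e * y e} βs) :
    βstar ≤ βs ∧ βs ≤ (1 + ε) * βstar :=
  small_oddsets_suffice_general G w b ε hε0 hε1 βstar hβstar βs hβs
end
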